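/- arXiv:2203.00163 — 9 statements merged into one kernel-verified Lean document; each statement's English description precedes it below -/
import Mathlib

section
/- Fix a real exponent s > 2 and m₁ ∈ (0,1), and define g(θ) = m₁ f_s(θ) + (1−m₁) f_s(θ − π/3). Then g has exactly one zero in each of the open intervals (0, π/3), (π/3, π), (π, 4π/3), and (4π/3, 2π), and g(π) ≠ 0 and g(4π/3) ≠ 0; hence g has exactly four zeros in (0, 2π) \ {π/3}. -/
/-!
On `(0, 2π)` one has `f_s(θ) = sin θ · (r^{-s} - 1)` with `r = 2 sin(θ/2)`, so `f_s` is positive on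
`(0, π/3)`, negative on `(π/3, π)`, positive on `(π, 5π/3)`, tends to `+∞` at `0⁺` and to `-∞` at
`2π⁻`, and satisfies `f_s(2π - θ) = -f_s(θ)`. Moreover `f_s' < 0` wherever `cos θ ≥ 0`, as `s ≥ 2`.

On `(0, π/3)` both terms of `g` decrease, and `g` runs from `+∞` to `-∞`. On the other three arcs
the sign pattern confines the zeros of `g` to `(π/3, 2π/3)`, `(π, 4π/3)` and `(5π/3, 2π)`, where
`g(θ) = 0` says `f_s(θ) / f_s(θ - π/3) = -(1 - m₁)/m₁`. This ratio has derivative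
`-W(θ - π/3) / f_s(θ - π/3)²`, with `W(u) = f_s'(u) f_s(u + π/3) - f_s(u) f_s'(u + π/3)`, and
`W > 0` on `(0, π/3)`, on `(2π/3, π)` (using `s · 3^{-s/2} ≤ 2/3`), and on `(4π/3, 5π/3)` by the
symmetry `W(5π/3 - u) = W(u)`. So the ratio is injective on each arc; the intermediate value
theorem, fed with the signs of `g` at `2π/3, π, 4π/3, 5π/3` and its limits at the poles, gives
existence.
-/

open Real Set

/-- `f_s(θ) = sin(θ)·(2^{-s}|sin(θ/2)|^{-s} − 1)`, the coorbital kernel function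
for a homogeneous potential with exponent `s`. -/
noncomputable def coorbitalF (s θ : ℝ) : ℝ :=
  Real.sin θ * ((2 : ℝ) ^ (-s) * |Real.sin (θ / 2)| ^ (-s) - 1)

open Filter Topology

lemma ncard_zeros_eq_four {f : ℝ → ℝ} {a b c d e : ℝ}
    (h₁ : ∃! x, x ∈ Ioo a b ∧ f x = 0) (h₂ : ∃! x, x ∈ Ioo b c ∧ f x = 0)
    (h₃ : ∃! x, x ∈ Ioo c d ∧ f x = 0) (h₄ : ∃! x, x ∈ Ioo d e ∧ f x = 0)
    (hc : f c ≠ 0) (hd : f d ≠ 0) :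
    {x | x ∈ Ioo a e ∧ x ≠ b ∧ f x = 0}.ncard = 4 := by
  obtain ⟨x₁, ⟨⟨ha₁, h₁b⟩, hf₁⟩, hu₁⟩ := h₁
  obtain ⟨x₂, ⟨⟨hb₂, h₂c⟩, hf₂⟩, hu₂⟩ := h₂
  obtain ⟨x₃, ⟨⟨hc₃, h₃d⟩, hf₃⟩, hu₃⟩ := h₃
  obtain ⟨x₄, ⟨⟨hd₄, h₄e⟩, hf₄⟩, hu₄⟩ := h₄
  refine ncard_eq_four.2 ⟨x₁, x₂, x₃, x₄, by linarith, by linarith, by linarith, by linarith,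
    by linarith, by linarith, ?_⟩
  ext x
  simp only [mem_ofPred_eq, mem_insert_iff, mem_singleton_iff]
  constructor
  · rintro ⟨⟨hax, hxe⟩, hxb, hfx⟩
    rcases hxb.lt_or_gt with hxb | hbx
    · exact Or.inl (hu₁ x ⟨⟨hax, hxb⟩, hfx⟩)
    rcases lt_trichotomy x c with hxc | rfl | hcx
    · exact Or.inr (Or.inl (hu₂ x ⟨⟨hbx, hxc⟩, hfx⟩))
    · exact absurd hfx hc
    rcases lt_trichotomy x d with hxd | rfl | hdx
    · exact Or.inr (Or.inr (Or.inl (hu₃ x ⟨⟨hcx, hxd⟩, hfx⟩)))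
    · exact absurd hfx hd
    · exact Or.inr (Or.inr (Or.inr (hu₄ x ⟨⟨hdx, hxe⟩, hfx⟩)))
  · rintro (rfl | rfl | rfl | rfl)
    · exact ⟨⟨ha₁, by linarith⟩, h₁b.ne, hf₁⟩
    · exact ⟨⟨by linarith, by linarith⟩, hb₂.ne', hf₂⟩
    · exact ⟨⟨by linarith, by linarith⟩, by linarith, hf₃⟩
    · exact ⟨⟨by linarith, h₄e⟩, by linarith, hf₄⟩

lemma sin_lt_sin_of_lt_of_lt_pi_sub {a x : ℝ} (ha : -(π / 2) ≤ a) (hax : a < x)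
    (hxa : x < π - a) : sin a < sin x := by
  rcases le_or_gt x (π / 2) with hx | hx
  · exact sin_lt_sin_of_lt_of_le_pi_div_two ha hx hax
  · rw [← sin_pi_sub x]
    exact sin_lt_sin_of_lt_of_le_pi_div_two ha (by linarith) (by linarith)

lemma sqrt_three_div_two_lt_sin {x : ℝ} (h₁ : π / 3 < x) (h₂ : x < 2 * π / 3) :
    √3 / 2 < sin x := by
  rw [← sin_pi_div_three]
  exact sin_lt_sin_of_lt_of_lt_pi_sub (by linarith [pi_pos]) h₁ (by linarith)

lemma sin_lt_sqrt_three_div_two {x : ℝ} (h₀ : 0 ≤ x) (h₁ : x < π / 3) : sin x < √3 / 2 := by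
  rw [← sin_pi_div_three]
  exact sin_lt_sin_of_lt_of_le_pi_div_two (by linarith [pi_pos]) (by linarith [pi_pos]) h₁

lemma half_lt_cos {x : ℝ} (h₀ : 0 ≤ x) (h₁ : x < π / 3) : 1 / 2 < cos x := by
  rw [← cos_pi_div_three]
  exact cos_lt_cos_of_nonneg_of_le_pi h₀ (by linarith [pi_pos]) h₁

lemma sin_half_pos {θ : ℝ} (h₀ : 0 < θ) (h₂ : θ < 2 * π) : 0 < sin (θ / 2) :=
  sin_pos_of_pos_of_lt_pi (by linarith) (by linarith)

lemma two_mul_sin_half_lt_one {θ : ℝ} (h₀ : 0 < θ) (h₁ : θ < π / 3) : 2 * sin (θ / 2) < 1 := by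
  have := sin_lt_sin_of_lt_of_le_pi_div_two (x := θ / 2) (y := π / 6) (by linarith)
    (by linarith [pi_pos]) (by linarith)
  linarith [sin_pi_div_six]

lemma one_lt_two_mul_sin_half {θ : ℝ} (h₁ : π / 3 < θ) (h₂ : θ < 5 * π / 3) :
    1 < 2 * sin (θ / 2) := by
  have := sin_lt_sin_of_lt_of_lt_pi_sub (a := π / 6) (x := θ / 2) (by linarith [pi_pos])
    (by linarith) (by linarith)
  linarith [sin_pi_div_six]

lemma sqrt_three_lt_two_mul_sin_half {θ : ℝ} (h₁ : 2 * π / 3 < θ) (h₂ : θ < 4 * π / 3) :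
    √3 < 2 * sin (θ / 2) := by
  linarith [sqrt_three_div_two_lt_sin (x := θ / 2) (by linarith) (by linarith)]

lemma mul_rpow_neg_le_two_div_three {s c : ℝ} (hs : 2 ≤ s) (hc : √3 ≤ c) :
    s * c ^ (-s) ≤ 2 / 3 := by
  have h3 : 0 < √3 := by positivity
  have hlog : 1 ≤ log 3 := by
    rw [le_log_iff_exp_le (by norm_num)]
    linarith [exp_one_lt_d9]
  have hexp : s / 2 ≤ √3 ^ (s - 2) := by
    rw [rpow_def_of_pos h3, log_sqrt (by norm_num)]
    nlinarith [add_one_le_exp (log 3 / 2 * (s - 2))]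
  have hpow : 3 * s / 2 ≤ √3 ^ s := by
    rw [show s = 2 + (s - 2) by ring, rpow_add h3, rpow_two, sq_sqrt (by norm_num)]
    linarith
  calc s * c ^ (-s) ≤ s * √3 ^ (-s) :=
        mul_le_mul_of_nonneg_left (rpow_le_rpow_of_nonpos h3 hc (by linarith)) (by linarith)
    _ = s / √3 ^ s := by rw [rpow_neg h3.le]; ring
    _ ≤ 2 / 3 := by rw [div_le_iff₀ (by positivity)]; linarith

/-- The paper's `r(θ)^{-s}`, written with `2 sin(θ/2)` in place of `r(θ) = 2 |sin(θ/2)|`: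
the two agree only for `θ ∈ [0, 2π]`. -/
noncomputable def chordPow (s θ : ℝ) : ℝ := (2 * sin (θ / 2)) ^ (-s)

section Chord

variable {s θ : ℝ}

lemma chordPow_pos (h₀ : 0 < θ) (h₂ : θ < 2 * π) : 0 < chordPow s θ :=
  rpow_pos_of_pos (by linarith [sin_half_pos h₀ h₂]) _

lemma one_lt_chordPow (hs : 0 < s) (h₀ : 0 < θ) (h₁ : θ < π / 3) : 1 < chordPow s θ :=
  one_lt_rpow_of_pos_of_lt_one_of_neg (by linarith [sin_half_pos h₀ (by linarith [pi_pos])])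
    (two_mul_sin_half_lt_one h₀ h₁) (by linarith)

lemma chordPow_lt_one (hs : 0 < s) (h₁ : π / 3 < θ) (h₂ : θ < 5 * π / 3) : chordPow s θ < 1 :=
  rpow_lt_one_of_one_lt_of_neg (one_lt_two_mul_sin_half h₁ h₂) (by linarith)

end Chord

lemma coorbitalF_eq_sin_mul {s θ : ℝ} (h : 0 ≤ sin (θ / 2)) :
    coorbitalF s θ = sin θ * (chordPow s θ - 1) := by
  rw [coorbitalF, chordPow, abs_of_nonneg h, mul_rpow zero_le_two h]

lemma coorbitalF_eq_cos_mul_rpow {s θ : ℝ} (h : 0 < sin (θ / 2)) :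
    coorbitalF s θ = cos (θ / 2) * (2 * sin (θ / 2)) ^ (1 - s) - sin θ := by
  have hc : 0 < 2 * sin (θ / 2) := by linarith
  have hsin : sin θ = 2 * sin (θ / 2) * cos (θ / 2) := by
    rw [← sin_two_mul, mul_div_cancel₀ θ two_ne_zero]
  rw [coorbitalF_eq_sin_mul h.le, chordPow, sub_eq_add_neg 1 s, rpow_add hc, rpow_one, hsin]
  ring

lemma coorbitalF_periodic (s : ℝ) : Function.Periodic (coorbitalF s) (2 * π) := by
  intro θ
  rw [coorbitalF, coorbitalF, add_div, mul_div_cancel_left₀ π two_ne_zero, sin_add_pi, abs_neg,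
    sin_add_two_pi]

lemma coorbitalF_odd (s : ℝ) : Function.Odd (coorbitalF s) := by
  intro θ
  rw [coorbitalF, coorbitalF, neg_div, sin_neg, sin_neg, abs_neg, neg_mul]

lemma coorbitalF_two_pi_sub (s θ : ℝ) : coorbitalF s (2 * π - θ) = -coorbitalF s θ := by
  rw [sub_eq_neg_add, coorbitalF_periodic s (-θ), coorbitalF_odd]

lemma coorbitalF_pi (s : ℝ) : coorbitalF s π = 0 := by simp [coorbitalF]

lemma coorbitalF_pi_div_three (s : ℝ) : coorbitalF s (π / 3) = 0 := by
  have h : sin (π / 3 / 2) = 1 / 2 := by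
    rw [div_div, show (3 : ℝ) * 2 = 6 by norm_num, sin_pi_div_six]
  rw [coorbitalF_eq_sin_mul (by rw [h]; norm_num), chordPow, h]
  norm_num

section Sign

variable {s θ : ℝ}

lemma coorbitalF_pos_of_lt_pi_div_three (hs : 0 < s) (h₀ : 0 < θ) (h₁ : θ < π / 3) :
    0 < coorbitalF s θ := by
  have hsin := sin_half_pos h₀ (by linarith [pi_pos])
  rw [coorbitalF_eq_sin_mul hsin.le]
  have := one_lt_chordPow hs h₀ h₁
  have : 0 < sin θ := sin_pos_of_pos_of_lt_pi h₀ (by linarith [pi_pos])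
  positivity

lemma coorbitalF_neg_of_pi_div_three_lt (hs : 0 < s) (h₁ : π / 3 < θ) (h₂ : θ < π) :
    coorbitalF s θ < 0 := by
  rw [coorbitalF_eq_sin_mul (sin_half_pos (by linarith [pi_pos]) (by linarith [pi_pos])).le]
  exact mul_neg_of_pos_of_neg (sin_pos_of_pos_of_lt_pi (by linarith [pi_pos]) h₂)
    (by linarith [chordPow_lt_one hs h₁ (by linarith [pi_pos])])

lemma coorbitalF_pos_of_pi_lt (hs : 0 < s) (h₁ : π < θ) (h₂ : θ < 5 * π / 3) :
    0 < coorbitalF s θ := by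
  rw [coorbitalF_eq_sin_mul (sin_half_pos (by linarith [pi_pos]) (by linarith [pi_pos])).le]
  have : sin θ < 0 := by
    rw [← sin_sub_two_pi]
    exact sin_neg_of_neg_of_neg_pi_lt (by linarith [pi_pos]) (by linarith)
  exact mul_pos_of_neg_of_neg this (by linarith [chordPow_lt_one hs (by linarith [pi_pos]) h₂])

lemma coorbitalF_nonpos_of_mem_Icc (hs : 0 < s) (h : θ ∈ Icc (π / 3) π) : coorbitalF s θ ≤ 0 := by
  rcases h.1.eq_or_lt with rfl | h₁
  · rw [coorbitalF_pi_div_three]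
  rcases h.2.eq_or_lt with rfl | h₂
  · rw [coorbitalF_pi]
  exact (coorbitalF_neg_of_pi_div_three_lt hs h₁ h₂).le

lemma coorbitalF_nonneg_of_mem_Icc (hs : 0 < s) (h : θ ∈ Icc π (5 * π / 3)) :
    0 ≤ coorbitalF s θ := by
  rcases h.1.eq_or_lt with rfl | h₁
  · rw [coorbitalF_pi]
  rcases h.2.eq_or_lt with rfl | h₂
  · rw [show 5 * π / 3 = 2 * π - π / 3 by ring, coorbitalF_two_pi_sub, coorbitalF_pi_div_three,
      neg_zero]
  exact (coorbitalF_pos_of_pi_lt hs h₁ h₂).le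

end Sign

section Deriv

variable {s θ : ℝ}

lemma hasDerivAt_coorbitalF (h₀ : 0 < θ) (h₂ : θ < 2 * π) :
    HasDerivAt (coorbitalF s)
      (cos θ * (chordPow s θ - 1) - s / 2 * (1 + cos θ) * chordPow s θ) θ := by
  have hhalf := sin_half_pos h₀ h₂
  have hc : 0 < 2 * sin (θ / 2) := by linarith
  have hchord : HasDerivAt (fun x => 2 * sin (x / 2)) (cos (θ / 2)) θ :=
    ((((hasDerivAt_id' θ).div_const 2).sin).const_mul 2).congr_deriv (by ring)
  have hpow : HasDerivAt (chordPow s) (cos (θ / 2) * -s * (2 * sin (θ / 2)) ^ (-s - 1)) θ :=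
    hchord.rpow_const (Or.inl hc.ne')
  have hsin : sin θ = 2 * sin (θ / 2) * cos (θ / 2) := by
    rw [← sin_two_mul]; ring_nf
  have hcos : 1 + cos θ = 2 * cos (θ / 2) ^ 2 := by
    rw [cos_sq, mul_div_cancel₀ θ two_ne_zero]; ring
  have hrpow : 2 * sin (θ / 2) * (2 * sin (θ / 2)) ^ (-s - 1) = chordPow s θ := by
    rw [rpow_sub_one hc.ne', chordPow]; field_simp
  refine (((hasDerivAt_sin θ).mul (hpow.sub_const 1)).congr_deriv ?_).congr_of_eventuallyEq ?_
  · rw [hcos, hsin, ← hrpow]; ring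
  · filter_upwards [Ioo_mem_nhds h₀ h₂] with x hx
    exact coorbitalF_eq_sin_mul (sin_half_pos hx.1 hx.2).le

lemma deriv_coorbitalF (h₀ : 0 < θ) (h₂ : θ < 2 * π) :
    deriv (coorbitalF s) θ = cos θ * (chordPow s θ - 1) - s / 2 * (1 + cos θ) * chordPow s θ :=
  (hasDerivAt_coorbitalF h₀ h₂).deriv

lemma differentiableAt_coorbitalF (h₀ : 0 < θ) (h₂ : θ < 2 * π) :
    DifferentiableAt ℝ (coorbitalF s) θ :=
  (hasDerivAt_coorbitalF h₀ h₂).differentiableAt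

lemma continuousAt_coorbitalF (h₀ : 0 < θ) (h₂ : θ < 2 * π) :
    ContinuousAt (coorbitalF s) θ :=
  (differentiableAt_coorbitalF h₀ h₂).continuousAt

lemma deriv_coorbitalF_two_pi_sub (s θ : ℝ) :
    deriv (coorbitalF s) (2 * π - θ) = deriv (coorbitalF s) θ := by
  have h := deriv_comp_const_sub (coorbitalF s) (2 * π) θ
  simp only [coorbitalF_two_pi_sub] at h
  rw [← Pi.neg_def, deriv.neg] at h
  linarith

-- `s / 2 * (1 + cos θ) ≥ 1 + cos θ` bounds the derivative by `-(cos θ + r^{-s})`.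
lemma deriv_coorbitalF_neg (hs : 2 ≤ s) (h₀ : 0 < θ) (h₂ : θ < 2 * π) (hcos : 0 ≤ cos θ) :
    deriv (coorbitalF s) θ < 0 := by
  have hP : 0 < chordPow s θ := rpow_pos_of_pos (by linarith [sin_half_pos h₀ h₂]) _
  rw [deriv_coorbitalF h₀ h₂]
  nlinarith [mul_nonneg (mul_nonneg (sub_nonneg.2 hs) (by linarith : 0 ≤ 1 + cos θ)) hP.le]

end Deriv

section Limits

variable {s : ℝ}

lemma tendsto_coorbitalF_nhdsGT_zero (hs : 1 < s) :
    Tendsto (coorbitalF s) (𝓝[>] 0) atTop := by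
  have hchord : Tendsto (fun θ => 2 * sin (θ / 2)) (𝓝[>] 0) (𝓝[>] 0) := by
    refine tendsto_nhdsWithin_iff.2 ⟨?_, ?_⟩
    · exact ((by fun_prop : Continuous fun θ : ℝ => 2 * sin (θ / 2)).tendsto' 0 0
        (by simp)).mono_left nhdsWithin_le_nhds
    · filter_upwards [Ioo_mem_nhdsGT two_pi_pos] with θ hθ
      exact mul_pos two_pos (sin_half_pos hθ.1 hθ.2)
  have hcos : Tendsto (fun θ => cos (θ / 2)) (𝓝[>] 0) (𝓝 1) :=
    ((by fun_prop : Continuous fun θ : ℝ => cos (θ / 2)).tendsto' 0 1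
      (by simp)).mono_left nhdsWithin_le_nhds
  have hsin : Tendsto (fun θ => -sin θ) (𝓝[>] 0) (𝓝 0) :=
    ((by fun_prop : Continuous fun θ : ℝ => -sin θ).tendsto' 0 0
      (by simp)).mono_left nhdsWithin_le_nhds
  have hpow := (tendsto_rpow_neg_nhdsGT_zero (y := 1 - s) (by linarith)).comp hchord
  refine ((hcos.pos_mul_atTop one_pos hpow).atTop_add hsin).congr' ?_
  filter_upwards [Ioo_mem_nhdsGT two_pi_pos] with θ hθ
  rw [coorbitalF_eq_cos_mul_rpow (sin_half_pos hθ.1 hθ.2)]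
  rfl

lemma tendsto_coorbitalF_nhdsLT_two_pi (hs : 1 < s) :
    Tendsto (coorbitalF s) (𝓝[<] (2 * π)) atBot := by
  have hrefl : Tendsto (fun θ => 2 * π - θ) (𝓝[<] (2 * π)) (𝓝[>] 0) := by
    simpa using (continuous_sub_left (2 * π)).continuousWithinAt.tendsto_nhdsWithin
      (s := Iio (2 * π)) (t := Ioi 0) (x := 2 * π) fun θ (hθ : θ < 2 * π) => sub_pos.2 hθ
  refine (tendsto_neg_atTop_atBot.comp ((tendsto_coorbitalF_nhdsGT_zero hs).comp hrefl)).congr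
    fun θ => ?_
  simp [coorbitalF_two_pi_sub]

end Limits

noncomputable def coorbitalWronskian (s u : ℝ) : ℝ :=
  deriv (coorbitalF s) u * coorbitalF s (u + π / 3) -
    coorbitalF s u * deriv (coorbitalF s) (u + π / 3)

section Wronskian

variable {s u : ℝ}

lemma coorbitalWronskian_eq (h₀ : 0 < u) (h₂ : u + π / 3 < 2 * π) :
    coorbitalWronskian s u =
      √3 / 2 * (chordPow s u - 1) * (chordPow s (u + π / 3) - 1) +
        s / 2 * ((1 + cos (u + π / 3)) * chordPow s (u + π / 3) * sin u * (chordPow s u - 1) -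
          (1 + cos u) * chordPow s u * sin (u + π / 3) * (chordPow s (u + π / 3) - 1)) := by
  have h₁ : 0 < u + π / 3 := by linarith [pi_pos]
  have hu : u < 2 * π := by linarith [pi_pos]
  have hsub : sin (u + π / 3) * cos u - cos (u + π / 3) * sin u = √3 / 2 := by
    rw [← sin_sub, add_sub_cancel_left, sin_pi_div_three]
  rw [coorbitalWronskian, deriv_coorbitalF h₀ hu, deriv_coorbitalF h₁ h₂,
    coorbitalF_eq_sin_mul (sin_half_pos h₀ hu).le, coorbitalF_eq_sin_mul (sin_half_pos h₁ h₂).le]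
  linear_combination (chordPow s u - 1) * (chordPow s (u + π / 3) - 1) * hsub

lemma coorbitalWronskian_five_pi_div_three_sub (s u : ℝ) :
    coorbitalWronskian s (5 * π / 3 - u) = coorbitalWronskian s u := by
  rw [coorbitalWronskian, coorbitalWronskian, show 5 * π / 3 - u + π / 3 = 2 * π - u by ring,
    show 5 * π / 3 - u = 2 * π - (u + π / 3) by ring, coorbitalF_two_pi_sub,
    coorbitalF_two_pi_sub, deriv_coorbitalF_two_pi_sub, deriv_coorbitalF_two_pi_sub]
  ring

lemma coorbitalWronskian_pos_of_lt_pi_div_three (hs : 2 ≤ s) (h₀ : 0 < u) (h₁ : u < π / 3) :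
    0 < coorbitalWronskian s u := by
  rw [coorbitalWronskian_eq h₀ (by linarith [pi_pos])]
  set p := chordPow s u
  set q := chordPow s (u + π / 3)
  have hp : 1 < p := one_lt_chordPow (by linarith) h₀ h₁
  have hq : q < 1 := chordPow_lt_one (by linarith) (by linarith) (by linarith [pi_pos])
  have hq₀ : 0 < q := chordPow_pos (by linarith [pi_pos]) (by linarith [pi_pos])
  have hsin_u : 0 < sin u := sin_pos_of_pos_of_lt_pi h₀ (by linarith [pi_pos])
  have hsin : √3 / 2 < sin (u + π / 3) := sqrt_three_div_two_lt_sin (by linarith) (by linarith)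
  have hcos_u : 0 ≤ cos u := cos_nonneg_of_mem_Icc ⟨by linarith [pi_pos], by linarith [pi_pos]⟩
  have hcos : 0 ≤ 1 + cos (u + π / 3) := by linarith [neg_one_le_cos (u + π / 3)]
  -- the only negative term is dominated by the last one, as `s / 2 * (1 + cos u) ≥ 1`
  have hdom : √3 / 2 * (p - 1) < s / 2 * (1 + cos u) * p * sin (u + π / 3) := by
    have h3 : 0 < √3 := by positivity
    calc √3 / 2 * (p - 1) < √3 / 2 * p := by linarith
      _ < sin (u + π / 3) * p := mul_lt_mul_of_pos_right hsin (by linarith)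
      _ ≤ s / 2 * (1 + cos u) * (sin (u + π / 3) * p) :=
        le_mul_of_one_le_left (by nlinarith) (by nlinarith)
      _ = s / 2 * (1 + cos u) * p * sin (u + π / 3) := by ring
  have := mul_lt_mul_of_pos_right hdom (sub_pos.2 hq)
  have : 0 ≤ (1 + cos (u + π / 3)) * q * sin u * (p - 1) :=
    mul_nonneg (mul_nonneg (mul_nonneg hcos hq₀.le) hsin_u.le) (by linarith)
  nlinarith

lemma coorbitalWronskian_pos_of_two_pi_div_three_lt (hs : 2 ≤ s) (h₁ : 2 * π / 3 < u)
    (h₂ : u < π) : 0 < coorbitalWronskian s u := by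
  rw [coorbitalWronskian_eq (by linarith [pi_pos]) (by linarith [pi_pos])]
  set p := chordPow s u
  set q := chordPow s (u + π / 3)
  have hp₀ : 0 < p := chordPow_pos (by linarith [pi_pos]) (by linarith [pi_pos])
  have hq₀ : 0 < q := chordPow_pos (by linarith [pi_pos]) (by linarith [pi_pos])
  have hsp : s * p ≤ 2 / 3 :=
    mul_rpow_neg_le_two_div_three hs (sqrt_three_lt_two_mul_sin_half (by linarith) (by linarith)).le
  have hsq : s * q ≤ 2 / 3 :=
    mul_rpow_neg_le_two_div_three hs (sqrt_three_lt_two_mul_sin_half (by linarith) (by linarith)).le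
  have hp : p ≤ 1 / 3 := by nlinarith
  have hq : q ≤ 1 / 3 := by nlinarith
  have hsin_u : sin u < √3 / 2 := by
    rw [← sin_pi_sub]; exact sin_lt_sqrt_three_div_two (by linarith) (by linarith)
  have hsin_u₀ : 0 < sin u := sin_pos_of_pos_of_lt_pi (by linarith [pi_pos]) h₂
  have hsin_v : -sin (u + π / 3) < √3 / 2 := by
    rw [← sin_sub_pi]; exact sin_lt_sqrt_three_div_two (by linarith) (by linarith)
  have hsin_v₀ : 0 < -sin (u + π / 3) := by
    rw [← sin_sub_pi]; exact sin_pos_of_pos_of_lt_pi (by linarith) (by linarith)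
  have hcos_u : cos u < -(1 / 2) := by
    have := half_lt_cos (x := π - u) (by linarith) (by linarith)
    rw [cos_pi_sub] at this; linarith
  have hcos_v : cos (u + π / 3) < -(1 / 2) := by
    have := half_lt_cos (x := u + π / 3 - π) (by linarith) (by linarith)
    rw [cos_sub_pi] at this; linarith
  have hcos_u₀ : 0 ≤ 1 + cos u := by linarith [neg_one_le_cos u]
  have hcos_v₀ : 0 ≤ 1 + cos (u + π / 3) := by linarith [neg_one_le_cos (u + π / 3)]
  -- the first term is at least `2√3/9`, the other two at least `-√3/12` each
  have hT₁ : 2 * √3 / 9 ≤ √3 / 2 * (p - 1) * (q - 1) := by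
    have : 4 / 9 ≤ (1 - p) * (1 - q) := by nlinarith
    nlinarith [sqrt_nonneg 3]
  have hT₂ : s * q * ((1 + cos (u + π / 3)) * (sin u * (1 - p))) ≤
      2 / 3 * (1 / 2 * (√3 / 2 * 1)) := by
    have h : 0 ≤ sin u * (1 - p) := mul_nonneg hsin_u₀.le (by linarith)
    gcongr <;> linarith [mul_nonneg hcos_v₀ h]
  have hT₃ : s * p * ((1 + cos u) * (-sin (u + π / 3) * (1 - q))) ≤
      2 / 3 * (1 / 2 * (√3 / 2 * 1)) := by
    have h : 0 ≤ -sin (u + π / 3) * (1 - q) := mul_nonneg hsin_v₀.le (by linarith)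
    gcongr <;> linarith [mul_nonneg hcos_u₀ h]
  nlinarith

lemma coorbitalWronskian_pos_of_four_pi_div_three_lt (hs : 2 ≤ s)
    (h₁ : 4 * π / 3 < u) (h₂ : u < 5 * π / 3) : 0 < coorbitalWronskian s u := by
  rw [← coorbitalWronskian_five_pi_div_three_sub]
  exact coorbitalWronskian_pos_of_lt_pi_div_three hs (by linarith) (by linarith)

end Wronskian

noncomputable def coorbitalG (s m θ : ℝ) : ℝ :=
  m * coorbitalF s θ + (1 - m) * coorbitalF s (θ - π / 3)

section CoorbitalG

variable {s m θ : ℝ}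

lemma coorbitalG_eq_add_five_pi_div_three (s m θ : ℝ) :
    coorbitalG s m θ = m * coorbitalF s θ + (1 - m) * coorbitalF s (θ + 5 * π / 3) := by
  rw [coorbitalG, ← coorbitalF_periodic s (θ - π / 3),
    show θ - π / 3 + 2 * π = θ + 5 * π / 3 by ring]

lemma hasDerivAt_coorbitalG (h₁ : π / 3 < θ) (h₂ : θ < 2 * π) :
    HasDerivAt (coorbitalG s m)
      (m * deriv (coorbitalF s) θ + (1 - m) * deriv (coorbitalF s) (θ - π / 3)) θ :=
  (((differentiableAt_coorbitalF (by linarith [pi_pos]) h₂).hasDerivAt).const_mul m).add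
    ((((differentiableAt_coorbitalF (θ := θ - π / 3) (by linarith)
      (by linarith)).hasDerivAt).comp_sub_const θ (π / 3)).const_mul (1 - m))

lemma hasDerivAt_coorbitalG_of_lt_pi_div_three (h₀ : 0 < θ) (h₁ : θ < π / 3) :
    HasDerivAt (coorbitalG s m)
      (m * deriv (coorbitalF s) θ + (1 - m) * deriv (coorbitalF s) (θ + 5 * π / 3)) θ := by
  rw [funext (coorbitalG_eq_add_five_pi_div_three s m)]
  exact (((differentiableAt_coorbitalF h₀ (by linarith [pi_pos])).hasDerivAt).const_mul m).add
    ((((differentiableAt_coorbitalF (θ := θ + 5 * π / 3) (by linarith [pi_pos])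
      (by linarith)).hasDerivAt).comp_add_const θ (5 * π / 3)).const_mul (1 - m))

lemma continuousAt_coorbitalG (h₀ : 0 < θ) (h₂ : θ < 2 * π) (hne : θ ≠ π / 3) :
    ContinuousAt (coorbitalG s m) θ := by
  rcases hne.lt_or_gt with h | h
  · exact (hasDerivAt_coorbitalG_of_lt_pi_div_three h₀ h).continuousAt
  · exact (hasDerivAt_coorbitalG h h₂).continuousAt

lemma coorbitalG_neg_of_mem_Icc (hs : 0 < s) (hm₀ : 0 < m) (hm₁ : m < 1)
    (h : θ ∈ Icc (2 * π / 3) π) : coorbitalG s m θ < 0 := by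
  have h₁ := coorbitalF_nonpos_of_mem_Icc hs ⟨by linarith [h.1, pi_pos], h.2⟩
  have h₂ := coorbitalF_nonpos_of_mem_Icc hs (θ := θ - π / 3)
    ⟨by linarith [h.1], by linarith [h.2, pi_pos]⟩
  rw [coorbitalG]
  rcases h.2.lt_or_eq with hlt | rfl
  · nlinarith [coorbitalF_neg_of_pi_div_three_lt hs (by linarith [h.1, pi_pos]) hlt]
  · nlinarith [coorbitalF_neg_of_pi_div_three_lt hs (θ := π - π / 3) (by linarith [pi_pos])
      (by linarith [pi_pos])]

lemma coorbitalG_pos_of_mem_Icc (hs : 0 < s) (hm₀ : 0 < m) (hm₁ : m < 1)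
    (h : θ ∈ Icc (4 * π / 3) (5 * π / 3)) : 0 < coorbitalG s m θ := by
  have h₁ := coorbitalF_nonneg_of_mem_Icc hs ⟨by linarith [h.1, pi_pos], h.2⟩
  have h₂ := coorbitalF_nonneg_of_mem_Icc hs (θ := θ - π / 3)
    ⟨by linarith [h.1], by linarith [h.2, pi_pos]⟩
  rw [coorbitalG]
  rcases h.2.lt_or_eq with hlt | rfl
  · nlinarith [coorbitalF_pos_of_pi_lt hs (by linarith [h.1, pi_pos]) hlt]
  · nlinarith [coorbitalF_pos_of_pi_lt hs (θ := 5 * π / 3 - π / 3) (by linarith [pi_pos])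
      (by linarith [pi_pos])]

lemma tendsto_coorbitalG_nhdsGT_zero (hs : 1 < s) (hm₀ : 0 < m) :
    Tendsto (coorbitalG s m) (𝓝[>] 0) atTop := by
  rw [funext (coorbitalG_eq_add_five_pi_div_three s m)]
  have hF : ContinuousAt (fun θ => (1 - m) * coorbitalF s (θ + 5 * π / 3)) 0 :=
    continuousAt_const.mul ((continuousAt_coorbitalF (by linarith [pi_pos])
      (by linarith [pi_pos])).comp_of_eq (by fun_prop) (zero_add _))
  exact ((tendsto_coorbitalF_nhdsGT_zero hs).const_mul_atTop hm₀).atTop_add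
    (hF.tendsto.mono_left nhdsWithin_le_nhds)

lemma tendsto_coorbitalG_nhdsLT_pi_div_three (hs : 1 < s) (hm₁ : m < 1) :
    Tendsto (coorbitalG s m) (𝓝[<] (π / 3)) atBot := by
  rw [funext (coorbitalG_eq_add_five_pi_div_three s m)]
  have hshift : Tendsto (· + 5 * π / 3) (𝓝[<] (π / 3)) (𝓝[<] (2 * π)) := by
    have h := (continuous_add_const (5 * π / 3)).continuousWithinAt.tendsto_nhdsWithin
      (s := Iio (π / 3)) (x := π / 3) (t := Iio (2 * π)) fun θ (hθ : θ < π / 3) =>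
        show θ + 5 * π / 3 < 2 * π by linarith
    rwa [show π / 3 + 5 * π / 3 = 2 * π by ring] at h
  refine Tendsto.add_atBot ((continuousAt_const.mul (continuousAt_coorbitalF (s := s)
    (by positivity) (by linarith [pi_pos]))).tendsto.mono_left nhdsWithin_le_nhds) ?_
  exact ((tendsto_coorbitalF_nhdsLT_two_pi hs).comp hshift).const_mul_atBot (by linarith)

lemma tendsto_coorbitalG_nhdsGT_pi_div_three (hs : 1 < s) (hm₁ : m < 1) :
    Tendsto (coorbitalG s m) (𝓝[>] (π / 3)) atTop := by
  have hshift : Tendsto (· - π / 3) (𝓝[>] (π / 3)) (𝓝[>] 0) := by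
    have h := (continuous_sub_right (π / 3)).continuousWithinAt.tendsto_nhdsWithin
      (s := Ioi (π / 3)) (x := π / 3) (t := Ioi 0) fun θ (hθ : π / 3 < θ) =>
        show 0 < θ - π / 3 by linarith
    rwa [sub_self] at h
  refine Tendsto.add_atTop ((continuousAt_const.mul (continuousAt_coorbitalF (s := s)
    (by positivity) (by linarith [pi_pos]))).tendsto.mono_left nhdsWithin_le_nhds) ?_
  exact ((tendsto_coorbitalF_nhdsGT_zero hs).comp hshift).const_mul_atTop (by linarith)

lemma tendsto_coorbitalG_nhdsLT_two_pi (hs : 1 < s) (hm₀ : 0 < m) :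
    Tendsto (coorbitalG s m) (𝓝[<] (2 * π)) atBot := by
  have hF : ContinuousAt (fun θ => (1 - m) * coorbitalF s (θ - π / 3)) (2 * π) :=
    continuousAt_const.mul ((continuousAt_coorbitalF (by linarith [pi_pos])
      (by linarith [pi_pos])).comp_of_eq (by fun_prop) rfl)
  exact ((tendsto_coorbitalF_nhdsLT_two_pi hs).const_mul_atBot hm₀).atBot_add
    (hF.tendsto.mono_left nhdsWithin_le_nhds)

end CoorbitalG

section Zeros

variable {s m : ℝ}

lemma hasDerivAt_coorbitalF_div {θ : ℝ} (h₁ : π / 3 < θ) (h₂ : θ < 2 * π)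
    (hF : coorbitalF s (θ - π / 3) ≠ 0) :
    HasDerivAt (fun x => coorbitalF s x / coorbitalF s (x - π / 3))
      (-coorbitalWronskian s (θ - π / 3) / coorbitalF s (θ - π / 3) ^ 2) θ := by
  have h := ((differentiableAt_coorbitalF (s := s) (by linarith [pi_pos]) h₂).hasDerivAt).div
    (((differentiableAt_coorbitalF (θ := θ - π / 3) (by linarith)
      (by linarith)).hasDerivAt).comp_sub_const θ (π / 3)) hF
  refine h.congr_deriv ?_
  rw [coorbitalWronskian, sub_add_cancel]
  ring

lemma strictAntiOn_coorbitalF_div {a b : ℝ} (ha : π / 3 ≤ a) (hb : b ≤ 2 * π)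
    (hF : ∀ θ ∈ Ioo a b, coorbitalF s (θ - π / 3) ≠ 0)
    (hW : ∀ θ ∈ Ioo a b, 0 < coorbitalWronskian s (θ - π / 3)) :
    StrictAntiOn (fun θ => coorbitalF s θ / coorbitalF s (θ - π / 3)) (Ioo a b) := by
  have hd : ∀ θ ∈ Ioo a b, HasDerivAt (fun x => coorbitalF s x / coorbitalF s (x - π / 3))
      (-coorbitalWronskian s (θ - π / 3) / coorbitalF s (θ - π / 3) ^ 2) θ := fun θ hθ =>
    hasDerivAt_coorbitalF_div (by linarith [hθ.1]) (by linarith [hθ.2]) (hF θ hθ)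
  refine strictAntiOn_of_deriv_neg (convex_Ioo a b)
    (fun θ hθ => (hd θ hθ).continuousAt.continuousWithinAt) fun θ hθ => ?_
  rw [interior_Ioo] at hθ
  rw [(hd θ hθ).deriv]
  exact div_neg_of_neg_of_pos (neg_neg_of_pos (hW θ hθ)) (pow_two_pos_of_ne_zero (hF θ hθ))

lemma subsingleton_coorbitalG_zeros {a b : ℝ} (hm₀ : 0 < m) (ha : π / 3 ≤ a) (hb : b ≤ 2 * π)
    (hF : ∀ θ ∈ Ioo a b, coorbitalF s (θ - π / 3) ≠ 0)
    (hW : ∀ θ ∈ Ioo a b, 0 < coorbitalWronskian s (θ - π / 3)) :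
    {θ | θ ∈ Ioo a b ∧ coorbitalG s m θ = 0}.Subsingleton := by
  have hratio : ∀ θ ∈ Ioo a b, coorbitalG s m θ = 0 →
      coorbitalF s θ / coorbitalF s (θ - π / 3) = -(1 - m) / m := by
    intro θ hθ h
    rw [div_eq_div_iff (hF θ hθ) hm₀.ne']
    rw [coorbitalG] at h
    linarith
  intro x hx y hy
  exact (strictAntiOn_coorbitalF_div ha hb hF hW).injOn hx.1 hy.1
    ((hratio x hx.1 hx.2).trans (hratio y hy.1 hy.2).symm)

lemma existsUnique_coorbitalG_eq_zero_Ioo_zero (hs : 2 ≤ s) (hm₀ : 0 < m) (hm₁ : m < 1) :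
    ∃! θ, θ ∈ Ioo 0 (π / 3) ∧ coorbitalG s m θ = 0 := by
  have hcont : ContinuousOn (coorbitalG s m) (Ioo 0 (π / 3)) := fun θ hθ =>
    (continuousAt_coorbitalG hθ.1 (by linarith [hθ.2, pi_pos]) hθ.2.ne).continuousWithinAt
  have hanti : StrictAntiOn (coorbitalG s m) (Ioo 0 (π / 3)) := by
    refine strictAntiOn_of_deriv_neg (convex_Ioo _ _) hcont fun θ hθ => ?_
    rw [interior_Ioo] at hθ
    have hcos : 0 ≤ cos (θ + 5 * π / 3) := by
      rw [show θ + 5 * π / 3 = θ - π / 3 + 2 * π by ring, cos_add_two_pi]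
      exact cos_nonneg_of_mem_Icc ⟨by linarith [hθ.1, pi_pos], by linarith [hθ.2, pi_pos]⟩
    have h₁ := deriv_coorbitalF_neg hs hθ.1 (by linarith [hθ.2, pi_pos])
      (cos_nonneg_of_mem_Icc ⟨by linarith [hθ.1, pi_pos], by linarith [hθ.2, pi_pos]⟩)
    have h₂ := deriv_coorbitalF_neg hs (by linarith [hθ.1, pi_pos]) (by linarith [hθ.2]) hcos
    rw [(hasDerivAt_coorbitalG_of_lt_pi_div_three hθ.1 hθ.2).deriv]
    nlinarith
  have hπ : (0 : ℝ) < π / 3 := by positivity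
  obtain ⟨x, hgx, hx⟩ := ((tendsto_coorbitalG_nhdsGT_zero (s := s) (by linarith)
    hm₀).eventually_gt_atTop 0 |>.and (Ioo_mem_nhdsGT hπ)).exists
  obtain ⟨y, hgy, hy⟩ := ((tendsto_coorbitalG_nhdsLT_pi_div_three (s := s) (by linarith)
    hm₁).eventually_lt_atBot 0 |>.and (Ioo_mem_nhdsLT hπ)).exists
  obtain ⟨θ, hθ, hgθ⟩ := isPreconnected_Ioo.intermediate_value hy hx hcont ⟨hgy.le, hgx.le⟩
  exact ⟨θ, ⟨hθ, hgθ⟩, fun θ' h => hanti.injOn h.1 hθ (h.2.trans hgθ.symm)⟩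

lemma existsUnique_coorbitalG_eq_zero_Ioo_pi_div_three (hs : 2 ≤ s) (hm₀ : 0 < m) (hm₁ : m < 1) :
    ∃! θ, θ ∈ Ioo (π / 3) π ∧ coorbitalG s m θ = 0 := by
  have hcont : ContinuousOn (coorbitalG s m) (Ioo (π / 3) π) := fun θ hθ =>
    (continuousAt_coorbitalG (by linarith [hθ.1, pi_pos]) (by linarith [hθ.2, pi_pos])
      hθ.1.ne').continuousWithinAt
  have hneg : ∀ θ ∈ Icc (2 * π / 3) π, coorbitalG s m θ < 0 := fun θ hθ =>
    coorbitalG_neg_of_mem_Icc (by linarith) hm₀ hm₁ hθ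
  obtain ⟨x, hgx, hx⟩ := ((tendsto_coorbitalG_nhdsGT_pi_div_three (s := s) (by linarith)
    hm₁).eventually_gt_atTop 0 |>.and (Ioo_mem_nhdsGT (by linarith [pi_pos] :
      π / 3 < 2 * π / 3))).exists
  obtain ⟨θ, hθ, hgθ⟩ := isPreconnected_Ioo.intermediate_value
    (⟨by linarith [pi_pos], by linarith [pi_pos]⟩ : 2 * π / 3 ∈ Ioo (π / 3) π)
    (⟨hx.1, by linarith [hx.2, pi_pos]⟩ : x ∈ Ioo (π / 3) π) hcont
    ⟨(hneg _ ⟨le_rfl, by linarith [pi_pos]⟩).le, hgx.le⟩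
  have huniq := subsingleton_coorbitalG_zeros (s := s) (b := 2 * π / 3) hm₀ le_rfl
    (by linarith [pi_pos])
    (fun θ hθ => (coorbitalF_pos_of_lt_pi_div_three (by linarith) (by linarith [hθ.1])
      (by linarith [hθ.2])).ne')
    (fun θ hθ => coorbitalWronskian_pos_of_lt_pi_div_three hs (by linarith [hθ.1])
      (by linarith [hθ.2]))
  have hsub : {θ | θ ∈ Ioo (π / 3) π ∧ coorbitalG s m θ = 0} ⊆
      {θ | θ ∈ Ioo (π / 3) (2 * π / 3) ∧ coorbitalG s m θ = 0} := fun θ h =>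
    ⟨⟨h.1.1, lt_of_not_ge fun h' => (hneg θ ⟨h', h.1.2.le⟩).ne h.2⟩, h.2⟩
  exact existsUnique_of_exists_of_unique ⟨θ, hθ, hgθ⟩ fun _ _ h₁ h₂ => huniq.anti hsub h₁ h₂

lemma existsUnique_coorbitalG_eq_zero_Ioo_pi (hs : 2 ≤ s) (hm₀ : 0 < m) (hm₁ : m < 1) :
    ∃! θ, θ ∈ Ioo π (4 * π / 3) ∧ coorbitalG s m θ = 0 := by
  have hcont : ContinuousOn (coorbitalG s m) (Icc π (4 * π / 3)) := fun θ hθ =>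
    (continuousAt_coorbitalG (by linarith [hθ.1, pi_pos]) (by linarith [hθ.2, pi_pos])
      (by linarith [hθ.1, pi_pos])).continuousWithinAt
  obtain ⟨θ, hθ, hgθ⟩ := intermediate_value_Ioo (by linarith [pi_pos]) hcont
    ⟨coorbitalG_neg_of_mem_Icc (by linarith) hm₀ hm₁ ⟨by linarith [pi_pos], le_rfl⟩,
      coorbitalG_pos_of_mem_Icc (by linarith) hm₀ hm₁ ⟨le_rfl, by linarith [pi_pos]⟩⟩
  have huniq := subsingleton_coorbitalG_zeros (s := s) (a := π) (b := 4 * π / 3) hm₀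
    (by linarith [pi_pos]) (by linarith [pi_pos])
    (fun θ hθ => (coorbitalF_neg_of_pi_div_three_lt (by linarith) (by linarith [hθ.1, pi_pos])
      (by linarith [hθ.2])).ne)
    (fun θ hθ => coorbitalWronskian_pos_of_two_pi_div_three_lt hs (by linarith [hθ.1])
      (by linarith [hθ.2]))
  exact existsUnique_of_exists_of_unique ⟨θ, hθ, hgθ⟩ fun _ _ h₁ h₂ => huniq h₁ h₂

lemma existsUnique_coorbitalG_eq_zero_Ioo_four_pi_div_three (hs : 2 ≤ s) (hm₀ : 0 < m)
    (hm₁ : m < 1) : ∃! θ, θ ∈ Ioo (4 * π / 3) (2 * π) ∧ coorbitalG s m θ = 0 := by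
  have hcont : ContinuousOn (coorbitalG s m) (Ioo (4 * π / 3) (2 * π)) := fun θ hθ =>
    (continuousAt_coorbitalG (by linarith [hθ.1, pi_pos]) hθ.2
      (by linarith [hθ.1, pi_pos])).continuousWithinAt
  have hpos : ∀ θ ∈ Icc (4 * π / 3) (5 * π / 3), 0 < coorbitalG s m θ := fun θ hθ =>
    coorbitalG_pos_of_mem_Icc (by linarith) hm₀ hm₁ hθ
  obtain ⟨x, hgx, hx⟩ := ((tendsto_coorbitalG_nhdsLT_two_pi (s := s) (by linarith)
    hm₀).eventually_lt_atBot 0 |>.and (Ioo_mem_nhdsLT (by linarith [pi_pos] :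
      5 * π / 3 < 2 * π))).exists
  obtain ⟨θ, hθ, hgθ⟩ := isPreconnected_Ioo.intermediate_value
    (⟨by linarith [hx.1, pi_pos], hx.2⟩ : x ∈ Ioo (4 * π / 3) (2 * π))
    (⟨by linarith [pi_pos], by linarith [pi_pos]⟩ : 5 * π / 3 ∈ Ioo (4 * π / 3) (2 * π)) hcont
    ⟨hgx.le, (hpos _ ⟨by linarith [pi_pos], le_rfl⟩).le⟩
  have huniq := subsingleton_coorbitalG_zeros (s := s) (a := 5 * π / 3) hm₀
    (by linarith [pi_pos]) le_rfl
    (fun θ hθ => (coorbitalF_pos_of_pi_lt (by linarith) (by linarith [hθ.1, pi_pos])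
      (by linarith [hθ.2])).ne')
    (fun θ hθ => coorbitalWronskian_pos_of_four_pi_div_three_lt hs (by linarith [hθ.1])
      (by linarith [hθ.2]))
  have hsub : {θ | θ ∈ Ioo (4 * π / 3) (2 * π) ∧ coorbitalG s m θ = 0} ⊆
      {θ | θ ∈ Ioo (5 * π / 3) (2 * π) ∧ coorbitalG s m θ = 0} := fun θ h =>
    ⟨⟨lt_of_not_ge fun h' => (hpos θ ⟨h.1.1.le, h'⟩).ne' h.2, h.1.2⟩, h.2⟩
  exact existsUnique_of_exists_of_unique ⟨θ, hθ, hgθ⟩ fun _ _ h₁ h₂ => huniq.anti hsub h₁ h₂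

end Zeros

/-- Fix `s > 2` and `m₁ ∈ (0,1)`, and let
`g(θ) = m₁ f_s(θ) + (1−m₁) f_s(θ − π/3)`.  Then `g` has exactly one zero in each of
the open intervals `(0, π/3)`, `(π/3, π)`, `(π, 4π/3)` and `(4π/3, 2π)`, and
`g(π) ≠ 0`, `g(4π/3) ≠ 0`; hence `g` has exactly four zeros in `(0, 2π) \ {π/3}`. -/
theorem one_plus_two_plus_one_lagrange_case (s m₁ : ℝ) (hs : 2 < s)
    (hm₁ : m₁ ∈ Set.Ioo (0 : ℝ) 1) (g : ℝ → ℝ)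
    (hg : g = fun θ => m₁ * coorbitalF s θ + (1 - m₁) * coorbitalF s (θ - π / 3)) :
    (∃! θ, θ ∈ Set.Ioo 0 (π / 3) ∧ g θ = 0) ∧
    (∃! θ, θ ∈ Set.Ioo (π / 3) π ∧ g θ = 0) ∧
    (∃! θ, θ ∈ Set.Ioo π (4 * π / 3) ∧ g θ = 0) ∧
    (∃! θ, θ ∈ Set.Ioo (4 * π / 3) (2 * π) ∧ g θ = 0) ∧
    g π ≠ 0 ∧ g (4 * π / 3) ≠ 0 ∧
    {θ : ℝ | θ ∈ Set.Ioo 0 (2 * π) ∧ θ ≠ π / 3 ∧ g θ = 0}.ncard = 4 := by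
  obtain ⟨hm₀, hm₁⟩ := hm₁
  obtain rfl : g = coorbitalG s m₁ := hg
  have h₁ := existsUnique_coorbitalG_eq_zero_Ioo_zero hs.le hm₀ hm₁
  have h₂ := existsUnique_coorbitalG_eq_zero_Ioo_pi_div_three hs.le hm₀ hm₁
  have h₃ := existsUnique_coorbitalG_eq_zero_Ioo_pi hs.le hm₀ hm₁
  have h₄ := existsUnique_coorbitalG_eq_zero_Ioo_four_pi_div_three hs.le hm₀ hm₁
  have hπ := (coorbitalG_neg_of_mem_Icc (s := s) (by linarith) hm₀ hm₁
    ⟨by linarith [pi_pos], le_rfl⟩).ne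
  have h4π := (coorbitalG_pos_of_mem_Icc (s := s) (by linarith) hm₀ hm₁
    ⟨le_rfl, by linarith [pi_pos]⟩).ne'
  exact ⟨h₁, h₂, h₃, h₄, hπ, h4π, ncard_zeros_eq_four h₁ h₂ h₃ h₄ hπ h4π⟩
end

section
/- Fix a real exponent s > 2 and m₁ ∈ (0,1). The function g̃(θ) = m₁·(2^{-s} sin(θ/2)^{-s} − 1) − (1−m₁)·(2^{-s} cos(θ/2)^{-s} − 1) is strictly decreasing on the interval (0, π), tends to +∞ as θ → 0⁺ and to −∞ as θ → π⁻, and has exactly one zero in (0, π). -/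
open Real Set Filter

set_option maxHeartbeats 800000

/-- Fix `s > 2` and `m₁ ∈ (0,1)`.  The function
`g̃(θ) = m₁·(2^{-s} sin(θ/2)^{-s} − 1) − (1−m₁)·(2^{-s} cos(θ/2)^{-s} − 1)`
is strictly decreasing on `(0, π)`, tends to `+∞` as `θ → 0⁺`, tends to `−∞` as
`θ → π⁻`, and has exactly one zero in `(0, π)`. -/
theorem one_plus_two_plus_one_euler_factor (s m₁ : ℝ) (hs : 2 < s)
    (hm₁ : m₁ ∈ Set.Ioo (0 : ℝ) 1) (gt : ℝ → ℝ)
    (hgt : gt = fun θ =>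
      m₁ * ((2 : ℝ) ^ (-s) * Real.sin (θ / 2) ^ (-s) - 1) -
      (1 - m₁) * ((2 : ℝ) ^ (-s) * Real.cos (θ / 2) ^ (-s) - 1)) :
    StrictAntiOn gt (Set.Ioo 0 π) ∧
    Filter.Tendsto gt (nhdsWithin 0 (Set.Ioi 0)) Filter.atTop ∧
    Filter.Tendsto gt (nhdsWithin π (Set.Iio π)) Filter.atBot ∧
    (∃! θ, θ ∈ Set.Ioo 0 π ∧ gt θ = 0) := by
  obtain ⟨hm0, hm1⟩ := hm₁
  have hm1' : (0:ℝ) < 1 - m₁ := by linarith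
  have hs0 : (0:ℝ) < s := by linarith
  have hns : -s < 0 := by linarith
  have hc2 : (0:ℝ) < (2 : ℝ) ^ (-s) := Real.rpow_pos_of_pos two_pos _
  have hpi := Real.pi_pos
  have hsinpos : ∀ θ ∈ Ioo (0:ℝ) π, 0 < Real.sin (θ / 2) := by
    intro θ hθ
    exact Real.sin_pos_of_pos_of_lt_pi (by linarith [hθ.1]) (by linarith [hθ.2])
  have hcospos : ∀ θ ∈ Ioo (0:ℝ) π, 0 < Real.cos (θ / 2) := by
    intro θ hθ
    exact Real.cos_pos_of_mem_Ioo ⟨by linarith [hθ.1], by linarith [hθ.2]⟩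
  -- Strict antitonicity
  have hanti : StrictAntiOn gt (Ioo 0 π) := by
    intro a ha b hb hab
    have hsa := hsinpos a ha; have hsb := hsinpos b hb
    have hca := hcospos a ha; have hcb := hcospos b hb
    have h1 : Real.sin (a / 2) < Real.sin (b / 2) :=
      Real.strictMonoOn_sin ⟨by linarith [ha.1], by linarith [ha.2]⟩
        ⟨by linarith [hb.1], by linarith [hb.2]⟩ (by linarith)
    have h2 : Real.cos (b / 2) < Real.cos (a / 2) :=
      Real.strictAntiOn_cos ⟨by linarith [ha.1], by linarith [ha.2]⟩
        ⟨by linarith [hb.1], by linarith [hb.2]⟩ (by linarith)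
    have hA : Real.sin (b / 2) ^ (-s) < Real.sin (a / 2) ^ (-s) :=
      Real.rpow_lt_rpow_of_neg hsa h1 hns
    have hB : Real.cos (a / 2) ^ (-s) < Real.cos (b / 2) ^ (-s) :=
      Real.rpow_lt_rpow_of_neg hcb h2 hns
    subst hgt
    simp only
    nlinarith [mul_pos (mul_pos hm0 hc2) (sub_pos.mpr hA),
      mul_pos (mul_pos hm1' hc2) (sub_pos.mpr hB)]
  -- tendsto atTop at 0⁺
  have hIoo0 : ∀ᶠ θ in nhdsWithin (0:ℝ) (Ioi 0), θ ∈ Ioo (0:ℝ) π :=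
    Filter.eventually_of_mem (Ioo_mem_nhdsGT_of_mem ⟨le_refl 0, hpi⟩) fun x hx => hx
  have hIooπ : ∀ᶠ θ in nhdsWithin π (Iio π), θ ∈ Ioo (0:ℝ) π :=
    Filter.eventually_of_mem (Ioo_mem_nhdsLT_of_mem ⟨hpi, le_refl π⟩) fun x hx => hx
  have hrpow_top : Tendsto (fun x : ℝ => x ^ (-s)) (nhdsWithin 0 (Ioi 0)) atTop := by
    have h1 : Tendsto (fun x : ℝ => x ^ s) (nhdsWithin 0 (Ioi 0)) (nhdsWithin 0 (Ioi 0)) := by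
      apply tendsto_nhdsWithin_of_tendsto_nhds_of_eventually_within
      · have : ContinuousAt (fun x : ℝ => x ^ s) 0 :=
          (Real.continuousAt_rpow_const 0 s (Or.inr hs0.le))
        have h0 : (0:ℝ) ^ s = 0 := Real.zero_rpow hs0.ne'
        exact (h0 ▸ this.tendsto).mono_left nhdsWithin_le_nhds
      · exact Filter.eventually_of_mem self_mem_nhdsWithin fun x hx =>
          Real.rpow_pos_of_pos hx s
    have h2 := tendsto_inv_nhdsGT_zero.comp h1
    refine h2.congr' ?_
    filter_upwards [self_mem_nhdsWithin] with x (hx : (0:ℝ) < x)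
    simp [Function.comp, Real.rpow_neg hx.le]
  have hsin0 : Tendsto (fun θ : ℝ => Real.sin (θ / 2)) (nhdsWithin 0 (Ioi 0))
      (nhdsWithin 0 (Ioi 0)) := by
    apply tendsto_nhdsWithin_of_tendsto_nhds_of_eventually_within
    · have : ContinuousAt (fun θ : ℝ => Real.sin (θ / 2)) 0 :=
        (Real.continuous_sin.comp (continuous_id.div_const 2)).continuousAt
      have h0 : Real.sin ((0:ℝ) / 2) = 0 := by norm_num
      exact (h0 ▸ this.tendsto).mono_left nhdsWithin_le_nhds
    · exact hIoo0.mono fun θ hθ => hsinpos θ hθ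
  have hcosπ : Tendsto (fun θ : ℝ => Real.cos (θ / 2)) (nhdsWithin π (Iio π))
      (nhdsWithin 0 (Ioi 0)) := by
    apply tendsto_nhdsWithin_of_tendsto_nhds_of_eventually_within
    · have : ContinuousAt (fun θ : ℝ => Real.cos (θ / 2)) π :=
        (Real.continuous_cos.comp (continuous_id.div_const 2)).continuousAt
      have h0 : Real.cos (π / 2) = 0 := Real.cos_pi_div_two
      exact (h0 ▸ this.tendsto).mono_left nhdsWithin_le_nhds
    · exact hIooπ.mono fun θ hθ => hcospos θ hθ
  have hT1 : Tendsto (fun θ : ℝ => Real.sin (θ / 2) ^ (-s)) (nhdsWithin 0 (Ioi 0)) atTop :=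
    hrpow_top.comp hsin0
  have hT2 : Tendsto (fun θ : ℝ => Real.cos (θ / 2) ^ (-s)) (nhdsWithin π (Iio π)) atTop :=
    hrpow_top.comp hcosπ
  -- continuous "other" parts
  have hcosc0 : ContinuousAt (fun θ : ℝ => Real.cos (θ / 2) ^ (-s)) 0 :=
    ((Real.continuous_cos.comp (continuous_id.div_const 2)).continuousAt).rpow_const
      (Or.inl (by norm_num))
  have hsincπ : ContinuousAt (fun θ : ℝ => Real.sin (θ / 2) ^ (-s)) π :=
    ((Real.continuous_sin.comp (continuous_id.div_const 2)).continuousAt).rpow_const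
      (Or.inl (by simp [Real.sin_pi_div_two]))
  have htop : Tendsto gt (nhdsWithin 0 (Ioi 0)) atTop := by
    rw [hgt]
    have heq : (fun θ : ℝ =>
        m₁ * ((2 : ℝ) ^ (-s) * Real.sin (θ / 2) ^ (-s) - 1) -
        (1 - m₁) * ((2 : ℝ) ^ (-s) * Real.cos (θ / 2) ^ (-s) - 1)) =
        fun θ : ℝ => (m₁ * (2 : ℝ) ^ (-s)) * Real.sin (θ / 2) ^ (-s) +
          (-m₁ - (1 - m₁) * ((2 : ℝ) ^ (-s) * Real.cos (θ / 2) ^ (-s) - 1)) := by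
      funext θ; ring
    rw [heq]
    apply Filter.Tendsto.atTop_add (hT1.const_mul_atTop (mul_pos hm0 hc2))
    have : ContinuousAt (fun θ : ℝ =>
        -m₁ - (1 - m₁) * ((2 : ℝ) ^ (-s) * Real.cos (θ / 2) ^ (-s) - 1)) 0 :=
      continuousAt_const.sub (continuousAt_const.mul
        (((hcosc0.const_mul _)).sub continuousAt_const))
    exact this.tendsto.mono_left nhdsWithin_le_nhds
  have hbot : Tendsto gt (nhdsWithin π (Iio π)) atBot := by
    rw [hgt]
    have heq : (fun θ : ℝ =>
        m₁ * ((2 : ℝ) ^ (-s) * Real.sin (θ / 2) ^ (-s) - 1) -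
        (1 - m₁) * ((2 : ℝ) ^ (-s) * Real.cos (θ / 2) ^ (-s) - 1)) =
        fun θ : ℝ => (-((1 - m₁) * (2 : ℝ) ^ (-s))) * Real.cos (θ / 2) ^ (-s) +
          (m₁ * ((2 : ℝ) ^ (-s) * Real.sin (θ / 2) ^ (-s) - 1) + (1 - m₁)) := by
      funext θ; ring
    rw [heq]
    apply Filter.Tendsto.atBot_add
      (hT2.const_mul_atTop_of_neg (neg_lt_zero.mpr (mul_pos hm1' hc2)))
    have : ContinuousAt (fun θ : ℝ =>
        m₁ * ((2 : ℝ) ^ (-s) * Real.sin (θ / 2) ^ (-s) - 1) + (1 - m₁)) π :=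
      (continuousAt_const.mul ((hsincπ.const_mul _).sub continuousAt_const)).add
        continuousAt_const
    exact this.tendsto.mono_left nhdsWithin_le_nhds
  -- continuity on the interval
  have hcont : ContinuousOn gt (Ioo 0 π) := by
    intro θ hθ
    apply ContinuousAt.continuousWithinAt
    have h1 : ContinuousAt (fun t : ℝ => Real.sin (t / 2) ^ (-s)) θ := by
      have hA : ContinuousAt (fun t : ℝ => Real.sin (t / 2)) θ :=
        (Real.continuous_sin.comp (continuous_id.div_const 2)).continuousAt
      exact hA.rpow_const (Or.inl (hsinpos θ hθ).ne')
    have h2 : ContinuousAt (fun t : ℝ => Real.cos (t / 2) ^ (-s)) θ := by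
      have hA : ContinuousAt (fun t : ℝ => Real.cos (t / 2)) θ :=
        (Real.continuous_cos.comp (continuous_id.div_const 2)).continuousAt
      exact hA.rpow_const (Or.inl (hcospos θ hθ).ne')
    rw [hgt]
    exact (continuousAt_const.mul ((h1.const_mul _).sub continuousAt_const)).sub
      (continuousAt_const.mul ((h2.const_mul _).sub continuousAt_const))
  -- existence and uniqueness of a zero
  have hex : ∃! θ, θ ∈ Ioo (0:ℝ) π ∧ gt θ = 0 := by
    obtain ⟨a, ha, haIoo⟩ := ((htop.eventually_gt_atTop 0).and hIoo0).exists
    obtain ⟨b, hb, hbIoo⟩ := ((hbot.eventually_lt_atBot 0).and hIooπ).exists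
    have hab : a < b := by
      rcases lt_trichotomy a b with h | h | h
      · exact h
      · exfalso; rw [h] at ha; linarith
      · exfalso; have := hanti hbIoo haIoo h; linarith
    have hIcc : Icc a b ⊆ Ioo (0:ℝ) π := fun x hx =>
      ⟨lt_of_lt_of_le haIoo.1 hx.1, lt_of_le_of_lt hx.2 hbIoo.2⟩
    obtain ⟨θ₀, hθ₀I, hθ₀⟩ := intermediate_value_Icc' hab.le (hcont.mono hIcc)
      ⟨hb.le, ha.le⟩
    have hθ₀Ioo : θ₀ ∈ Ioo (0:ℝ) π := hIcc hθ₀I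
    refine ⟨θ₀, ⟨hθ₀Ioo, hθ₀⟩, ?_⟩
    rintro y ⟨hyIoo, hy⟩
    exact hanti.injOn hyIoo hθ₀Ioo (by rw [hy, hθ₀])
  exact ⟨hanti, htop, hbot, hex⟩
end

section
/- Let a, b, c be real numbers with a ≠ 0 and b ≠ 0, and let F be the 4×4 real antisymmetric matrix with rows (0, a, 0, −a), (−a, 0, b, c), (0, −b, 0, b), (a, −c, −b, 0). Then det F = 0, the rank of F is 2, and the kernel of F is exactly two-dimensional, spanned by the vectors (b, 0, a, 0)ᵀ and (0, b, −c, b)ᵀ. -/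
/-!
The kernel of `F` contains the two displayed vectors, which are independent as soon as `b ≠ 0`.
Conversely, row 3 of `F x = 0` reads `b (x₃ - x₁) = 0`, so `x₃ = x₁`, and row 2 then gives
`b x₂ = a x₀ - c x₁`: this says exactly that `x = (x₀ / b) (b, 0, a, 0) + (x₁ / b) (0, b, -c, b)`.
Rank–nullity turns the two-dimensional kernel into rank `2`.
-/

open Matrix

theorem Matrix.rank_add_finrank_ker_mulVecLin {m n K : Type*} [Fintype n] [Field K]
    (M : Matrix m n K) :
    M.rank + Module.finrank K (LinearMap.ker M.mulVecLin) = Fintype.card n := by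
  rw [Matrix.rank, LinearMap.finrank_range_add_finrank_ker, Module.finrank_fintype_fun_eq_card]

theorem finrank_span_pair {K V : Type*} [DivisionRing K] [AddCommGroup V] [Module K V]
    {x y : V} (h : LinearIndependent K ![x, y]) :
    Module.finrank K (Submodule.span K {x, y}) = 2 := by
  rw [← Matrix.range_cons_cons_empty, finrank_span_eq_card h, Fintype.card_fin]

section CoorbitalMassMatrix

variable {K : Type*} [Field K] (a b c : K)

def coorbitalMassMatrix : Matrix (Fin 4) (Fin 4) K :=
  !![0, a, 0, -a; -a, 0, b, c; 0, -b, 0, b; a, -c, -b, 0]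

/-- The Pfaffian `a b - 0 c + (-a) b` of this antisymmetric matrix vanishes. -/
theorem det_coorbitalMassMatrix : (coorbitalMassMatrix a b c).det = 0 := by
  rw [coorbitalMassMatrix, det_succ_row_zero]
  simp [Fin.sum_univ_succ, det_fin_three, Fin.succAbove]
  ring

theorem coorbitalMassMatrix_mulVec (x : Fin 4 → K) :
    coorbitalMassMatrix a b c *ᵥ x =
      ![a * (x 1 - x 3), -a * x 0 + b * x 2 + c * x 3, b * (x 3 - x 1),
        a * x 0 - c * x 1 - b * x 2] := by
  ext i
  fin_cases i <;> simp [coorbitalMassMatrix, mulVec, dotProduct, Fin.sum_univ_four] <;> ring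

variable {a b c}

theorem linearIndependent_coorbitalMassMatrix_kernel (hb : b ≠ 0) :
    LinearIndependent K ![![b, 0, a, 0], ![0, b, -c, b]] := by
  rw [LinearIndependent.pair_iff]
  intro s t hst
  have h0 := congrFun hst 0
  have h1 := congrFun hst 1
  simp only [Pi.add_apply, Pi.smul_apply, smul_eq_mul, Pi.zero_apply] at h0 h1
  simp_all

theorem ker_coorbitalMassMatrix (hb : b ≠ 0) :
    LinearMap.ker (coorbitalMassMatrix a b c).mulVecLin =
      Submodule.span K {![b, 0, a, 0], ![0, b, -c, b]} := by
  apply le_antisymm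
  · intro x hx
    rw [LinearMap.mem_ker, mulVecLin_apply, coorbitalMassMatrix_mulVec] at hx
    have row1 : -a * x 0 + b * x 2 + c * x 3 = 0 := congrFun hx 1
    have hx31 : x 3 = x 1 := by
      have row2 : b * (x 3 - x 1) = 0 := congrFun hx 2
      exact sub_eq_zero.mp ((mul_eq_zero.mp row2).resolve_left hb)
    rw [Submodule.mem_span_pair]
    refine ⟨x 0 / b, x 1 / b, ?_⟩
    ext i
    fin_cases i <;> simp <;> field_simp
    · linear_combination -row1 + c * hx31
    · exact hx31.symm
  · rw [Submodule.span_le, Set.insert_subset_iff, Set.singleton_subset_iff]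
    constructor <;> ext i <;> fin_cases i <;> simp [coorbitalMassMatrix_mulVec] <;> ring

end CoorbitalMassMatrix

theorem type1_symmetric_one_plus_four_kernel_general (a b c : ℝ) (hb : b ≠ 0)
    (F : Matrix (Fin 4) (Fin 4) ℝ)
    (hF : F = !![0, a, 0, -a; -a, 0, b, c; 0, -b, 0, b; a, -c, -b, 0]) :
    F.det = 0 ∧ F.rank = 2 ∧
    LinearMap.ker F.mulVecLin =
      Submodule.span ℝ {![b, 0, a, 0], ![0, b, -c, b]} ∧
    Module.finrank ℝ (LinearMap.ker F.mulVecLin) = 2 := by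
  obtain rfl : F = coorbitalMassMatrix a b c := hF
  have hker := ker_coorbitalMassMatrix (a := a) (c := c) hb
  have hnullity : Module.finrank ℝ (LinearMap.ker (coorbitalMassMatrix a b c).mulVecLin) = 2 := by
    rw [hker, finrank_span_pair (linearIndependent_coorbitalMassMatrix_kernel hb)]
  have hrank := (coorbitalMassMatrix a b c).rank_add_finrank_ker_mulVecLin
  rw [hnullity, Fintype.card_fin] at hrank
  exact ⟨det_coorbitalMassMatrix a b c, by omega, hker, hnullity⟩

/-- Let `a, b, c` be reals with `a ≠ 0` and `b ≠ 0`, and let `F` be the `4×4` real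
antisymmetric matrix with rows `(0, a, 0, −a)`, `(−a, 0, b, c)`, `(0, −b, 0, b)`,
`(a, −c, −b, 0)` (the mass coefficient matrix of a type-1 symmetric 1+4 coorbital
configuration).  Then `det F = 0`, `F` has rank `2`, and the kernel of `F` is exactly
two-dimensional, spanned by `(b, 0, a, 0)ᵀ` and `(0, b, −c, b)ᵀ`. -/
theorem type1_symmetric_one_plus_four_kernel (a b c : ℝ) (ha : a ≠ 0) (hb : b ≠ 0)
    (F : Matrix (Fin 4) (Fin 4) ℝ)
    (hF : F = !![0, a, 0, -a; -a, 0, b, c; 0, -b, 0, b; a, -c, -b, 0]) :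
    F.det = 0 ∧ F.rank = 2 ∧
    LinearMap.ker F.mulVecLin =
      Submodule.span ℝ {![b, 0, a, 0], ![0, b, -c, b]} ∧
    Module.finrank ℝ (LinearMap.ker F.mulVecLin) = 2 :=
  type1_symmetric_one_plus_four_kernel_general a b c hb F hF
end

section
/- For all α, β ∈ [0, π/2], writing r(θ) = 2 sin(θ/2), the following identity holds: sin(α)·r(β)³·(1 − r(α)³) − sin(β)·r(α)³·(1 − r(β)³) = 32 sin(α/2) sin(β/2) sin((β−α)/4) · [ 8 sin²(α/2) sin²(β/2) cos((α+β)/2) cos((β−α)/4) + sin((α+β)/4)·(1 + cos(α/2) cos(β/2)) ]. -/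
open Real Set

/-- For all `α, β ∈ [0, π/2]`, writing `r(θ) = 2 sin(θ/2)` for the chord length,
the following factorization identity holds:
`sin(α)·r(β)³·(1 − r(α)³) − sin(β)·r(α)³·(1 − r(β)³)
  = 32 sin(α/2) sin(β/2) sin((β−α)/4) ·
    [ 8 sin²(α/2) sin²(β/2) cos((α+β)/2) cos((β−α)/4)
      + sin((α+β)/4)·(1 + cos(α/2) cos(β/2)) ]`. -/
theorem chord_factorization_lemma (α β : ℝ) (hα : α ∈ Set.Icc 0 (π / 2))
    (hβ : β ∈ Set.Icc 0 (π / 2)) (r : ℝ → ℝ)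
    (hr : r = fun θ => 2 * Real.sin (θ / 2)) :
    Real.sin α * r β ^ 3 * (1 - r α ^ 3) - Real.sin β * r α ^ 3 * (1 - r β ^ 3) =
      32 * Real.sin (α / 2) * Real.sin (β / 2) * Real.sin ((β - α) / 4) *
        (8 * Real.sin (α / 2) ^ 2 * Real.sin (β / 2) ^ 2 * Real.cos ((α + β) / 2) *
            Real.cos ((β - α) / 4) +
          Real.sin ((α + β) / 4) * (1 + Real.cos (α / 2) * Real.cos (β / 2))) := by
  subst hr
  simp only
  set sa := Real.sin (α / 4) with hsa
  set ca := Real.cos (α / 4) with hca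
  set sb := Real.sin (β / 4) with hsb
  set cb := Real.cos (β / 4) with hcb
  have e2a : α / 2 = 2 * (α / 4) := by ring
  have e2b : β / 2 = 2 * (β / 4) := by ring
  have hsha : Real.sin (α / 2) = 2 * sa * ca := by
    rw [e2a, Real.sin_two_mul]
  have hshb : Real.sin (β / 2) = 2 * sb * cb := by
    rw [e2b, Real.sin_two_mul]
  have hcha : Real.cos (α / 2) = ca ^ 2 - sa ^ 2 := by
    rw [e2a, Real.cos_two_mul']
  have hchb : Real.cos (β / 2) = cb ^ 2 - sb ^ 2 := by
    rw [e2b, Real.cos_two_mul']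
  have hfa : Real.sin α = 2 * Real.sin (α / 2) * Real.cos (α / 2) := by
    rw [show α = 2 * (α / 2) by ring, Real.sin_two_mul]
    norm_num
  have hfb : Real.sin β = 2 * Real.sin (β / 2) * Real.cos (β / 2) := by
    rw [show β = 2 * (β / 2) by ring, Real.sin_two_mul]
    norm_num
  have hdifs : Real.sin ((β - α) / 4) = sb * ca - cb * sa := by
    rw [show (β - α) / 4 = β / 4 - α / 4 by ring, Real.sin_sub]
  have hdifc : Real.cos ((β - α) / 4) = cb * ca + sb * sa := by
    rw [show (β - α) / 4 = β / 4 - α / 4 by ring, Real.cos_sub]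
  have hsums : Real.sin ((α + β) / 4) = sa * cb + ca * sb := by
    rw [show (α + β) / 4 = α / 4 + β / 4 by ring, Real.sin_add]
  have hsumc : Real.cos ((α + β) / 2) =
      Real.cos (α / 2) * Real.cos (β / 2) - Real.sin (α / 2) * Real.sin (β / 2) := by
    rw [show (α + β) / 2 = α / 2 + β / 2 by ring, Real.cos_add]
  rw [hfa, hfb, hdifs, hdifc, hsums, hsumc, hsha, hshb, hcha, hchb]
  have h1 : sa ^ 2 + ca ^ 2 = 1 := Real.sin_sq_add_cos_sq (α / 4)
  have h2 : sb ^ 2 + cb ^ 2 = 1 := Real.sin_sq_add_cos_sq (β / 4)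
  linear_combination
    ((-128)*sa^1*ca^1*sb^3*cb^1 + (128)*sa^1*ca^1*sb^3*cb^3 + (128)*sa^1*ca^1*sb^5*cb^1 + (-128)*sa^1*ca^3*sb^3*cb^3 + (128)*sa^1*ca^3*sb^5*cb^1 + (-256)*sa^3*ca^1*sb^1*cb^3 + (128)*sa^3*ca^1*sb^1*cb^5 + (256)*sa^3*ca^1*sb^3*cb^1 + (128)*sa^3*ca^1*sb^3*cb^3 + (-256)*sa^3*ca^1*sb^5*cb^1 + (-16384)*sa^3*ca^3*sb^4*cb^6 + (16384)*sa^3*ca^3*sb^6*cb^4 + (-16384)*sa^3*ca^5*sb^4*cb^6 + (16384)*sa^3*ca^5*sb^6*cb^4 + (-16384)*sa^4*sb^3*cb^3 + (16384)*sa^4*sb^3*cb^7 + (32768)*sa^4*sb^5*cb^5 + (16384)*sa^4*sb^7*cb^3 + (-16384)*sa^4*ca^2*sb^3*cb^3 + (16384)*sa^4*ca^2*sb^3*cb^7 + (32768)*sa^4*ca^2*sb^5*cb^5 + (16384)*sa^4*ca^2*sb^7*cb^3 + (-16384)*sa^4*ca^4*sb^3*cb^3 + (16384)*sa^4*ca^4*sb^3*cb^7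 + (32768)*sa^4*ca^4*sb^5*cb^5 + (16384)*sa^4*ca^4*sb^7*cb^3 + (-16384)*sa^5*ca^3*sb^4*cb^6 + (16384)*sa^5*ca^3*sb^6*cb^4 + (49152)*sa^6*sb^3*cb^3 + (-49152)*sa^6*sb^3*cb^7 + (-98304)*sa^6*sb^5*cb^5 + (-49152)*sa^6*sb^7*cb^3 + (32768)*sa^6*ca^2*sb^3*cb^3 + (-32768)*sa^6*ca^2*sb^3*cb^7 + (-65536)*sa^6*ca^2*sb^5*cb^5 + (-32768)*sa^6*ca^2*sb^7*cb^3 + (-32768)*sa^8*sb^3*cb^3 + (32768)*sa^8*sb^3*cb^7 + (65536)*sa^8*sb^5*cb^5 + (32768)*sa^8*sb^7*cb^3) * h1 +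
    ((128)*sa^1*ca^1*sb^3*cb^1 + (128)*sa^3*ca^1*sb^1*cb^3 + (-384)*sa^3*ca^1*sb^3*cb^1 + (16384)*sa^4*sb^3*cb^3 + (16384)*sa^4*sb^3*cb^5 + (16384)*sa^4*sb^5*cb^3 + (-256)*sa^5*ca^1*sb^1*cb^3 + (256)*sa^5*ca^1*sb^3*cb^1 + (-65536)*sa^6*sb^3*cb^3 + (-65536)*sa^6*sb^3*cb^5 + (-65536)*sa^6*sb^5*cb^3 + (81920)*sa^8*sb^3*cb^3 + (81920)*sa^8*sb^3*cb^5 + (81920)*sa^8*sb^5*cb^3 + (-32768)*sa^10*sb^3*cb^3 + (-32768)*sa^10*sb^3*cb^5 + (-32768)*sa^10*sb^5*cb^3) * h2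
end

section
/- Consider the Newtonian 1+4 coorbital problem (s = 3) with angles satisfying −π/2 < θ₄ < θ₃ < 0 < θ₂ < θ₁ and θ₁ − θ₄ ≤ π (a convex configuration). If the masses satisfy m₁ = m₄ > 0 and m₂ = m₃ > 0 and F m = 0, then θ₁ − θ₂ = θ₃ − θ₄, i.e., the configuration is symmetric with respect to an axis through the central mass. -/
open Real Matrix

/-!
Adding the first and the last equation of `F m = 0` and using `m₁ = m₄`, `m₂ = m₃` and the
oddness of `f = f₃` leaves `f(u) + f(u + w) = f(v) + f(v + w)` for the gaps
`u = θ₁ - θ₂`, `w = θ₂ - θ₃`, `v = θ₃ - θ₄`. Although `f` is not monotone on `(0, π)`, any two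
values of `f'` at points `x, y > 0` with `x + y ≤ π` have a negative sum, so
`t ↦ f(v + t) - f(u + w - t)` decreases strictly; comparing its values at `t = 0` and
`t = u - v` shows that `u ≠ v` is impossible.
-/

lemma coorbitalF_neg (s θ : ℝ) : coorbitalF s (-θ) = -coorbitalF s θ := by
  simp only [coorbitalF, neg_div, Real.sin_neg, abs_neg, neg_mul]

lemma coorbitalF_zero (s : ℝ) : coorbitalF s 0 = 0 := by
  simp [coorbitalF]

lemma add_lt_add_of_hasDerivAt_add_neg {f f' : ℝ → ℝ} {a u v w : ℝ}
    (hf : ∀ x ∈ Set.Ioo 0 a, HasDerivAt f (f' x) x)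
    (hf' : ∀ x y, 0 < x → 0 < y → x + y ≤ a → f' x + f' y < 0)
    (hv : 0 < v) (hvu : v < u) (hw : 0 ≤ w) (hsum : u + w + v ≤ a) :
    f u + f (u + w) < f v + f (v + w) := by
  set Φ : ℝ → ℝ := fun t => f (v + t) - f (u + w - t)
  have hΦ : ∀ t ∈ Set.Icc 0 (u - v), HasDerivAt Φ (f' (v + t) + f' (u + w - t)) t := by
    rintro t ⟨ht₀, ht₁⟩
    have h₁ := (hf (v + t) ⟨by linarith, by linarith⟩).comp t ((hasDerivAt_id t).const_add v)
    have h₂ := (hf (u + w - t) ⟨by linarith, by linarith⟩).comp t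
      ((hasDerivAt_id t).const_sub (u + w))
    exact (h₁.sub h₂).congr_deriv (by ring)
  have hanti : StrictAntiOn Φ (Set.Icc 0 (u - v)) :=
    strictAntiOn_of_deriv_neg (convex_Icc _ _)
      (fun t ht => (hΦ t ht).continuousAt.continuousWithinAt) fun t ht => by
        rw [interior_Icc] at ht
        rw [(hΦ t (Set.Ioo_subset_Icc_self ht)).deriv]
        exact hf' _ _ (by linarith [ht.1]) (by linarith [ht.2]) (by linarith)
  have h := hanti (Set.left_mem_Icc.2 (by linarith)) (Set.right_mem_Icc.2 (by linarith))
    (sub_pos.2 hvu)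
  simp only [Φ, add_zero, sub_zero, add_sub_cancel, show u + w - (u - v) = v + w by ring] at h
  linarith

noncomputable def coorbitalFDeriv (s θ : ℝ) : ℝ :=
  (2 : ℝ) ^ (-s) * Real.sin (θ / 2) ^ (-s) *
    ((1 - s) * Real.cos (θ / 2) ^ 2 - Real.sin (θ / 2) ^ 2) - Real.cos θ

lemma hasDerivAt_coorbitalF_s9 (s : ℝ) {θ : ℝ} (h₀ : 0 < θ) (h₁ : θ < 2 * π) :
    HasDerivAt (coorbitalF s) (coorbitalFDeriv s θ) θ := by
  have hS : ∀ x ∈ Set.Ioo 0 (2 * π), 0 < Real.sin (x / 2) := fun x hx =>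
    Real.sin_pos_of_pos_of_lt_pi (by linarith [hx.1]) (by linarith [hx.2])
  have hθ : 0 < Real.sin (θ / 2) := hS θ ⟨h₀, h₁⟩
  have hEq : (fun x => Real.sin x * ((2 : ℝ) ^ (-s) * Real.sin (x / 2) ^ (-s) - 1))
      =ᶠ[nhds θ] coorbitalF s := by
    filter_upwards [Ioo_mem_nhds h₀ h₁] with x hx
    simp only [coorbitalF, abs_of_pos (hS x hx)]
  have hhalf : HasDerivAt (fun x => Real.sin (x / 2)) (Real.cos (θ / 2) * (1 / 2)) θ :=
    (Real.hasDerivAt_sin _).comp θ ((hasDerivAt_id θ).div_const 2)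
  have hpow := hhalf.rpow_const (p := -s) (Or.inl hθ.ne')
  refine HasDerivAt.congr_of_eventuallyEq (HasDerivAt.congr_deriv
    ((Real.hasDerivAt_sin θ).mul ((hpow.const_mul ((2 : ℝ) ^ (-s))).sub_const 1)) ?_) hEq.symm
  have hsin : Real.sin θ = 2 * Real.sin (θ / 2) * Real.cos (θ / 2) := by
    rw [← Real.sin_two_mul]; ring_nf
  have hcos : Real.cos θ = Real.cos (θ / 2) ^ 2 - Real.sin (θ / 2) ^ 2 := by
    rw [← Real.cos_two_mul']; ring_nf
  rw [Real.rpow_sub_one hθ.ne', coorbitalFDeriv, hsin, hcos]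
  field_simp
  ring

lemma coorbitalFDeriv_add_neg {s x y : ℝ} (hs : 1 ≤ s) (hx : 0 < x) (hy : 0 < y)
    (hxy : x + y ≤ π) : coorbitalFDeriv s x + coorbitalFDeriv s y < 0 := by
  have hsingular : ∀ z, 0 < z → z < π →
      (2 : ℝ) ^ (-s) * Real.sin (z / 2) ^ (-s) *
        ((1 - s) * Real.cos (z / 2) ^ 2 - Real.sin (z / 2) ^ 2) < 0 := by
    intro z hz₀ hz₁
    have hS : 0 < Real.sin (z / 2) := Real.sin_pos_of_pos_of_lt_pi (by linarith) (by linarith)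
    refine mul_neg_of_pos_of_neg (by positivity) ?_
    nlinarith [sq_nonneg (Real.cos (z / 2))]
  have hcos : -Real.cos x ≤ Real.cos y := by
    rw [← Real.cos_pi_sub]
    exact Real.cos_le_cos_of_nonneg_of_le_pi hy.le (by linarith) (by linarith)
  have hx' := hsingular x hx (by linarith)
  have hy' := hsingular y hy (by linarith)
  simp only [coorbitalFDeriv]
  linarith

lemma coorbitalF_add_lt {s u v w : ℝ} (hs : 1 ≤ s) (hv : 0 < v) (hvu : v < u) (hw : 0 ≤ w)
    (hsum : u + w + v ≤ π) :
    coorbitalF s u + coorbitalF s (u + w) < coorbitalF s v + coorbitalF s (v + w) :=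
  add_lt_add_of_hasDerivAt_add_neg
    (fun _ hx => hasDerivAt_coorbitalF_s9 s hx.1 (by linarith [hx.2, Real.pi_pos]))
    (fun _ _ hx hy hxy => coorbitalFDeriv_add_neg hs hx hy hxy) hv hvu hw hsum

lemma coorbitalF_add_eq_of_mulVec_eq_zero {s θ₁ θ₂ θ₃ θ₄ : ℝ} {m : Fin 4 → ℝ}
    (hm14 : m 0 = m 3) (hm23 : m 1 = m 2) (hm2 : m 1 ≠ 0)
    (hF : (Matrix.of fun i j : Fin 4 =>
        coorbitalF s (![θ₁, θ₂, θ₃, θ₄] i - ![θ₁, θ₂, θ₃, θ₄] j)).mulVec m = 0) :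
    coorbitalF s (θ₁ - θ₂) + coorbitalF s (θ₁ - θ₃)
      = coorbitalF s (θ₃ - θ₄) + coorbitalF s (θ₂ - θ₄) := by
  have h₀ := congrFun hF 0
  have h₃ := congrFun hF 3
  simp only [Matrix.mulVec, dotProduct, Fin.sum_univ_four, Matrix.of_apply, Pi.zero_apply,
    Matrix.cons_val, sub_self] at h₀ h₃
  rw [← neg_sub θ₁ θ₄, ← neg_sub θ₂ θ₄, ← neg_sub θ₃ θ₄] at h₃
  simp only [coorbitalF_neg, coorbitalF_zero, ← hm14, ← hm23] at h₀ h₃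
  have hdiff : m 1 * (coorbitalF s (θ₁ - θ₂) + coorbitalF s (θ₁ - θ₃)
      - (coorbitalF s (θ₃ - θ₄) + coorbitalF s (θ₂ - θ₄))) = 0 := by
    linear_combination h₀ + h₃
  exact sub_eq_zero.1 ((mul_eq_zero.1 hdiff).resolve_left hm2)

theorem symmetric_masses_imply_symmetric_one_plus_four_general
    (θ₁ θ₂ θ₃ θ₄ : ℝ) (h₄₃ : θ₄ < θ₃) (h₃ : θ₃ < 0)
    (h₂ : 0 < θ₂) (h₂₁ : θ₂ < θ₁) (hconv : θ₁ - θ₄ ≤ π)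
    (m : Fin 4 → ℝ) (hm14 : m 0 = m 3) (hm23 : m 1 = m 2)
    (hm2 : 0 < m 1)
    (hF : (Matrix.of fun i j : Fin 4 =>
        coorbitalF 3 (![θ₁, θ₂, θ₃, θ₄] i - ![θ₁, θ₂, θ₃, θ₄] j)).mulVec m = 0) :
    θ₁ - θ₂ = θ₃ - θ₄ := by
  have hbal := coorbitalF_add_eq_of_mulVec_eq_zero hm14 hm23 hm2.ne' hF
  rw [show θ₁ - θ₃ = (θ₁ - θ₂) + (θ₂ - θ₃) by ring,
    show θ₂ - θ₄ = (θ₃ - θ₄) + (θ₂ - θ₃) by ring] at hbal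
  have hw : 0 ≤ θ₂ - θ₃ := by linarith
  rcases lt_trichotomy (θ₁ - θ₂) (θ₃ - θ₄) with hlt | heq | hgt
  · exact absurd hbal.symm
      (coorbitalF_add_lt (by norm_num) (by linarith) hlt hw (by linarith)).ne
  · exact heq
  · exact absurd hbal (coorbitalF_add_lt (by norm_num) (by linarith) hgt hw (by linarith)).ne

/-- Newtonian 1+4 coorbital problem (`s = 3`), convex configuration with
`−π/2 < θ₄ < θ₃ < 0 < θ₂ < θ₁` and `θ₁ − θ₄ ≤ π`.  If the masses satisfy
`m₁ = m₄ > 0`, `m₂ = m₃ > 0` and `F m = 0` (where `Fᵢⱼ = f₃(θᵢ − θⱼ)`),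
then `θ₁ − θ₂ = θ₃ − θ₄`, i.e. the configuration is symmetric with respect
to an axis through the central mass. -/
theorem symmetric_masses_imply_symmetric_one_plus_four
    (θ₁ θ₂ θ₃ θ₄ : ℝ) (h₄ : -(π / 2) < θ₄) (h₄₃ : θ₄ < θ₃) (h₃ : θ₃ < 0)
    (h₂ : 0 < θ₂) (h₂₁ : θ₂ < θ₁) (hconv : θ₁ - θ₄ ≤ π)
    (m : Fin 4 → ℝ) (hm14 : m 0 = m 3) (hm23 : m 1 = m 2)
    (hm1 : 0 < m 0) (hm2 : 0 < m 1)
    (hF : (Matrix.of fun i j : Fin 4 =>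
        coorbitalF 3 (![θ₁, θ₂, θ₃, θ₄] i - ![θ₁, θ₂, θ₃, θ₄] j)).mulVec m = 0) :
    θ₁ - θ₂ = θ₃ - θ₄ :=
  symmetric_masses_imply_symmetric_one_plus_four_general θ₁ θ₂ θ₃ θ₄ h₄₃ h₃ h₂ h₂₁ hconv m hm14 hm23
    hm2 hF
end

section
/- Let −π/2 < θ₄ < θ₃ < 0 < θ₂ < θ₁ with θ₁ − θ₄ ≤ π, and write θ_{i,j} = θ_i − θ_j. Then the quantity 4 cos((θ_{3,4} − θ_{1,2})/4)·(cos((θ_{3,4} + θ_{1,2})/2) + cos((θ_{2,4} + θ_{1,3})/2)) + (1/(2 sin²(θ_{1,2}/2) sin²(θ_{3,4}/2)))·sin((θ_{3,4} + θ_{1,2})/4)·(1 + cos(θ_{1,2}/2) cos(θ_{3,4}/2)) + (1/(2 sin²(θ_{1,3}/2) sin²(θ_{2,4}/2)))·sin((θ_{2,4} + θ_{1,3})/4)·(1 + cos(θ_{1,3}/2) cos(θ_{2,4}/2)) is strictly positive; in particular cos((θ_{3,4} + θ_{1,2})/2) + cos((θ_{2,4} + θ_{1,3})/2) = 2 cos(θ_{1,4}/2)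 cos(θ_{2,3}/2) ≥ 0. -/
open Real

set_option maxHeartbeats 1000000 in
/-- Let `−π/2 < θ₄ < θ₃ < 0 < θ₂ < θ₁` with `θ₁ − θ₄ ≤ π`, and write
`θ_{i,j} = θᵢ − θⱼ`.  Then the bracketed quantity from the symmetry proof for
convex 1+4 configurations is strictly positive; in particular
`cos((θ_{3,4} + θ_{1,2})/2) + cos((θ_{2,4} + θ_{1,3})/2) = 2 cos(θ_{1,4}/2) cos(θ_{2,3}/2) ≥ 0`. -/
theorem bracket_positivity_one_plus_four
    (θ₁ θ₂ θ₃ θ₄ : ℝ) (h₄ : -(π / 2) < θ₄) (h₄₃ : θ₄ < θ₃) (h₃ : θ₃ < 0)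
    (h₂ : 0 < θ₂) (h₂₁ : θ₂ < θ₁) (hconv : θ₁ - θ₄ ≤ π) :
    0 < 4 * Real.cos (((θ₃ - θ₄) - (θ₁ - θ₂)) / 4) *
          (Real.cos (((θ₃ - θ₄) + (θ₁ - θ₂)) / 2) +
            Real.cos (((θ₂ - θ₄) + (θ₁ - θ₃)) / 2)) +
        (1 / (2 * Real.sin ((θ₁ - θ₂) / 2) ^ 2 * Real.sin ((θ₃ - θ₄) / 2) ^ 2)) *
          Real.sin (((θ₃ - θ₄) + (θ₁ - θ₂)) / 4) *
          (1 + Real.cos ((θ₁ - θ₂) / 2) * Real.cos ((θ₃ - θ₄) / 2)) +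
        (1 / (2 * Real.sin ((θ₁ - θ₃) / 2) ^ 2 * Real.sin ((θ₂ - θ₄) / 2) ^ 2)) *
          Real.sin (((θ₂ - θ₄) + (θ₁ - θ₃)) / 4) *
          (1 + Real.cos ((θ₁ - θ₃) / 2) * Real.cos ((θ₂ - θ₄) / 2)) ∧
      Real.cos (((θ₃ - θ₄) + (θ₁ - θ₂)) / 2) +
          Real.cos (((θ₂ - θ₄) + (θ₁ - θ₃)) / 2) =
        2 * Real.cos ((θ₁ - θ₄) / 2) * Real.cos ((θ₂ - θ₃) / 2) ∧
      0 ≤ 2 * Real.cos ((θ₁ - θ₄) / 2) * Real.cos ((θ₂ - θ₃) / 2) := by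
  have hπ : (0:ℝ) < π := Real.pi_pos
  -- sum-to-product identity
  have hsum : Real.cos (((θ₃ - θ₄) + (θ₁ - θ₂)) / 2) +
      Real.cos (((θ₂ - θ₄) + (θ₁ - θ₃)) / 2) =
      2 * Real.cos ((θ₁ - θ₄) / 2) * Real.cos ((θ₂ - θ₃) / 2) := by
    rw [show ((θ₃ - θ₄) + (θ₁ - θ₂)) / 2 = (θ₁ - θ₄) / 2 - (θ₂ - θ₃) / 2 by ring,
      show ((θ₂ - θ₄) + (θ₁ - θ₃)) / 2 = (θ₁ - θ₄) / 2 + (θ₂ - θ₃) / 2 by ring,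
      Real.cos_sub, Real.cos_add]
    ring
  -- nonnegativity of the product
  have hcu : 0 ≤ Real.cos ((θ₁ - θ₄) / 2) :=
    Real.cos_nonneg_of_mem_Icc ⟨by linarith, by linarith⟩
  have hcv : 0 ≤ Real.cos ((θ₂ - θ₃) / 2) :=
    Real.cos_nonneg_of_mem_Icc ⟨by linarith, by linarith⟩
  have hprod : 0 ≤ 2 * Real.cos ((θ₁ - θ₄) / 2) * Real.cos ((θ₂ - θ₃) / 2) :=
    mul_nonneg (mul_nonneg (by norm_num) hcu) hcv
  refine ⟨?_, hsum, hprod⟩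
  -- first term nonneg
  have hcosA : 0 < Real.cos (((θ₃ - θ₄) - (θ₁ - θ₂)) / 4) :=
    Real.cos_pos_of_mem_Ioo ⟨by linarith, by linarith⟩
  have hT1 : 0 ≤ 4 * Real.cos (((θ₃ - θ₄) - (θ₁ - θ₂)) / 4) *
      (Real.cos (((θ₃ - θ₄) + (θ₁ - θ₂)) / 2) +
        Real.cos (((θ₂ - θ₄) + (θ₁ - θ₃)) / 2)) := by
    rw [hsum]
    nlinarith [mul_nonneg hcu hcv]
  -- second term pos
  have hs12 : 0 < Real.sin ((θ₁ - θ₂) / 2) :=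
    Real.sin_pos_of_pos_of_lt_pi (by linarith) (by linarith)
  have hs34 : 0 < Real.sin ((θ₃ - θ₄) / 2) :=
    Real.sin_pos_of_pos_of_lt_pi (by linarith) (by linarith)
  have hs13 : 0 < Real.sin ((θ₁ - θ₃) / 2) :=
    Real.sin_pos_of_pos_of_lt_pi (by linarith) (by linarith)
  have hs24 : 0 < Real.sin ((θ₂ - θ₄) / 2) :=
    Real.sin_pos_of_pos_of_lt_pi (by linarith) (by linarith)
  have hsA : 0 < Real.sin (((θ₃ - θ₄) + (θ₁ - θ₂)) / 4) :=
    Real.sin_pos_of_pos_of_lt_pi (by linarith) (by linarith)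
  have hsB : 0 < Real.sin (((θ₂ - θ₄) + (θ₁ - θ₃)) / 4) :=
    Real.sin_pos_of_pos_of_lt_pi (by linarith) (by linarith)
  have hc12 : 0 < Real.cos ((θ₁ - θ₂) / 2) :=
    Real.cos_pos_of_mem_Ioo ⟨by linarith, by linarith⟩
  have hc34 : 0 < Real.cos ((θ₃ - θ₄) / 2) :=
    Real.cos_pos_of_mem_Ioo ⟨by linarith, by linarith⟩
  have hc13 : 0 < Real.cos ((θ₁ - θ₃) / 2) :=
    Real.cos_pos_of_mem_Ioo ⟨by linarith, by linarith⟩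
  have hc24 : 0 < Real.cos ((θ₂ - θ₄) / 2) :=
    Real.cos_pos_of_mem_Ioo ⟨by linarith, by linarith⟩
  have hd2 : 0 < 2 * Real.sin ((θ₁ - θ₂) / 2) ^ 2 * Real.sin ((θ₃ - θ₄) / 2) ^ 2 :=
    mul_pos (mul_pos two_pos (pow_pos hs12 2)) (pow_pos hs34 2)
  have hd3 : 0 < 2 * Real.sin ((θ₁ - θ₃) / 2) ^ 2 * Real.sin ((θ₂ - θ₄) / 2) ^ 2 :=
    mul_pos (mul_pos two_pos (pow_pos hs13 2)) (pow_pos hs24 2)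
  have he2 : 0 < 1 + Real.cos ((θ₁ - θ₂) / 2) * Real.cos ((θ₃ - θ₄) / 2) := by
    nlinarith [mul_pos hc12 hc34]
  have he3 : 0 < 1 + Real.cos ((θ₁ - θ₃) / 2) * Real.cos ((θ₂ - θ₄) / 2) := by
    nlinarith [mul_pos hc13 hc24]
  have hT2 : 0 < (1 / (2 * Real.sin ((θ₁ - θ₂) / 2) ^ 2 * Real.sin ((θ₃ - θ₄) / 2) ^ 2)) *
      Real.sin (((θ₃ - θ₄) + (θ₁ - θ₂)) / 4) *
      (1 + Real.cos ((θ₁ - θ₂) / 2) * Real.cos ((θ₃ - θ₄) / 2)) :=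
    mul_pos (mul_pos (one_div_pos.mpr hd2) hsA) he2
  have hT3 : 0 < (1 / (2 * Real.sin ((θ₁ - θ₃) / 2) ^ 2 * Real.sin ((θ₂ - θ₄) / 2) ^ 2)) *
      Real.sin (((θ₂ - θ₄) + (θ₁ - θ₃)) / 4) *
      (1 + Real.cos ((θ₁ - θ₃) / 2) * Real.cos ((θ₂ - θ₄) / 2)) :=
    mul_pos (mul_pos (one_div_pos.mpr hd3) hsB) he3
  linarith
end

section
/- For all real numbers a, b, c, d, e, g, h, k, the 6×6 real antisymmetric matrix with rows (0, a, b, 0, −b, −a), (−a, 0, c, d, e, g), (−b, −c, 0, h, k, e), (0, −d, −h, 0, h, d), (b, −e, −k, −h, 0, c), (a, −g, −e, −d, −c, 0) has determinant zero; consequently its kernel has dimension at least 2. -/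
/-!
The reflection `i ↦ -i` of `Fin 6` (that is, `θ ↦ -θ` on the configuration) satisfies
`F (-i) (-j) = -F i j`, so `F` anticommutes with the involution `x ↦ x ∘ (-·)`. Hence `F`
sends reflection-even vectors to reflection-odd ones, and `range F ⊆ W ⊔ F W` with `W` the
2-dimensional space of odd vectors. So `rank F ≤ 4`, the kernel has dimension at least `2`,
and `det F = 0`.
-/

open Matrix Module LinearMap

theorem LinearMap.range_le_sup_map_of_anticomm {K V : Type*} [Field K] [AddCommGroup V]
    [Module K V] (h2 : (2 : K) ≠ 0) {f σ : Module.End K V} (hσ : σ * σ = 1)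
    (hfσ : f * σ = -(σ * f)) :
    range f ≤ ker (σ + 1) ⊔ (ker (σ + 1)).map f := by
  have hσx (x : V) : σ (σ x) = x := congr($hσ x)
  have hfσx (x : V) : f (σ x) = -σ (f x) := congr($hfσ x)
  rintro _ ⟨x, rfl⟩
  have heven : f (x + σ x) ∈ ker (σ + 1) := by
    simp only [mem_ker, add_apply, map_add, hfσx, map_neg, hσx, Module.End.one_apply]
    abel
  have hodd : x - σ x ∈ ker (σ + 1) := by
    simp only [mem_ker, add_apply, map_sub, hσx, Module.End.one_apply]
    abel
  have hsplit : x = (2 : K)⁻¹ • (x + σ x) + (2 : K)⁻¹ • (x - σ x) := by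
    rw [← smul_add, add_add_sub_cancel, ← two_smul K x, smul_smul, inv_mul_cancel₀ h2, one_smul]
  rw [hsplit, map_add, map_smul]
  exact Submodule.add_mem_sup (Submodule.smul_mem _ _ heven)
    (Submodule.mem_map_of_mem (Submodule.smul_mem _ _ hodd))

theorem LinearMap.finrank_range_le_of_anticomm {K V : Type*} [Field K] [AddCommGroup V]
    [Module K V] [FiniteDimensional K V] (h2 : (2 : K) ≠ 0) {f σ : Module.End K V}
    (hσ : σ * σ = 1) (hfσ : f * σ = -(σ * f)) :
    finrank K (range f) ≤ 2 * finrank K (ker (σ + 1)) :=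
  calc finrank K (range f)
      ≤ finrank K (ker (σ + 1) ⊔ (ker (σ + 1)).map f : Submodule K V) :=
        Submodule.finrank_mono (range_le_sup_map_of_anticomm h2 hσ hfσ)
    _ ≤ finrank K (ker (σ + 1)) + finrank K ((ker (σ + 1)).map f) :=
        Submodule.finrank_add_le_finrank_add_finrank _ _
    _ ≤ 2 * finrank K (ker (σ + 1)) := by
        have := Submodule.finrank_map_le f (ker (σ + 1))
        omega

theorem Matrix.rank_le_of_submatrix_eq_neg {K n : Type*} [Field K] [Fintype n]
    (h2 : (2 : K) ≠ 0) {M : Matrix n n K} {τ : Equiv.Perm n} (hτ : Function.Involutive τ)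
    (hM : M.submatrix τ τ = -M) :
    M.rank ≤ 2 * finrank K (ker (funLeft K K τ + 1)) := by
  refine finrank_range_le_of_anticomm h2 ?_ ?_
  · ext x i
    simp [funLeft_apply, hτ i]
  · ext x : 1
    have hMτ : M *ᵥ (x ∘ τ) = -((M *ᵥ x) ∘ τ) := by
      rw [← neg_neg (M *ᵥ _), ← neg_mulVec, ← hM, submatrix_mulVec_equiv, Function.comp_assoc,
        Equiv.self_comp_symm, Function.comp_id]
    simpa [funLeft] using hMτ

theorem finrank_ker_funLeft_neg_add_one_le :
    finrank ℝ (ker (funLeft ℝ ℝ (Equiv.neg (Fin 6)) + 1)) ≤ 2 := by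
  let w : Fin 2 → Fin 6 → ℝ := ![![0, 1, 0, 0, 0, -1], ![0, 0, 1, 0, -1, 0]]
  have hker : ker (funLeft ℝ ℝ (Equiv.neg (Fin 6)) + 1) ≤ Submodule.span ℝ (Set.range w) := by
    intro x hx
    have hodd (i : Fin 6) : x (-i) + x i = 0 := congr_fun hx i
    have h0 : x 0 + x 0 = 0 := hodd 0
    have h1 : x 5 + x 1 = 0 := hodd 1
    have h2 : x 4 + x 2 = 0 := hodd 2
    have h3 : x 3 + x 3 = 0 := hodd 3
    refine (Submodule.mem_span_range_iff_exists_fun ℝ).mpr ⟨![x 1, x 2], ?_⟩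
    ext i
    fin_cases i <;> simp [Fin.sum_univ_two, w] <;> linarith
  exact (Submodule.finrank_mono hker).trans ((finrank_range_le_card w).trans_eq (by simp))

/-- For all reals `a, b, c, d, e, g, h, k`, the `6×6` real antisymmetric matrix
with rows `(0, a, b, 0, −b, −a)`, `(−a, 0, c, d, e, g)`, `(−b, −c, 0, h, k, e)`,
`(0, −d, −h, 0, h, d)`, `(b, −e, −k, −h, 0, c)`, `(a, −g, −e, −d, −c, 0)`
(the mass coefficient matrix of a type-1 symmetric 1+6 coorbital configuration)
has determinant zero; consequently its kernel has dimension at least `2`. -/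
theorem type1_symmetric_one_plus_six_det_zero (a b c d e g h k : ℝ)
    (F : Matrix (Fin 6) (Fin 6) ℝ)
    (hF : F = !![0, a, b, 0, -b, -a;
                 -a, 0, c, d, e, g;
                 -b, -c, 0, h, k, e;
                 0, -d, -h, 0, h, d;
                 b, -e, -k, -h, 0, c;
                 a, -g, -e, -d, -c, 0]) :
    F.det = 0 ∧ 2 ≤ Module.finrank ℝ (LinearMap.ker F.mulVecLin) := by
  have hanti : F.submatrix (Equiv.neg (Fin 6)) (Equiv.neg (Fin 6)) = -F := by
    subst hF
    ext i j
    fin_cases i <;> fin_cases j <;> simp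
  have hrank : F.rank ≤ 4 :=
    (F.rank_le_of_submatrix_eq_neg two_ne_zero neg_involutive hanti).trans
      (by have := finrank_ker_funLeft_neg_add_one_le; omega)
  have hker : 2 ≤ finrank ℝ (ker F.mulVecLin) := by
    have := F.mulVecLin.finrank_range_add_finrank_ker
    rw [← Matrix.rank, finrank_fin_fun] at this
    omega
  refine ⟨by_contra fun hdet => ?_, hker⟩
  have := F.rank_of_det_ne_zero hdet
  rw [Fintype.card_fin] at this
  omega
end

section
/- Let s = 3, r(θ) = 2 sin(θ/2), and h(r) = r²/2 − 1 + 1/(4r) − 2/r³. For any angles 0 < θ₂ < θ₁ < π/2 set h₁₂ = h(r(θ₁−θ₂)), h₁₄ = h(r(θ₁+θ₂)), h₁₃ = h(r(θ₁)), h₂₃ = h(r(θ₂)). Then for all positive masses m₁, m₂, m₃ > 0 the 2×2 symmetric matrix 𝓗₁ with diagonal entries 2(h₁₂+h₁₄)m₁m₂ + 2h₁₃m₁m₃ and 2(h₁₂+h₁₄)m₁m₂ + 2h₂₃m₂m₃, and off-diagonal entries −2m₁m₂(h₁₂+h₁₄), has positive determinant, equal to 4m₁m₂m₃·((h₁₂+h₁₄)(h₁₃m₁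 + h₂₃m₂) + h₁₃h₂₃m₃), and negative trace; hence 𝓗₁ is negative definite. -/
/-!
Write Hall's function as `h x = x²/2 - 1 + (x² - 8)/(4x³)`. The last term is negative for
`0 < x < 2√2`, so `h` is negative on chords of length at most `√2` (angles up to `π/2`), and
`h x + h y < 0` whenever `x² + y² = 4`. As `h` increases on `(0, 2√2]` and
`r(θ₁ + θ₂) < 2 cos ((θ₁ - θ₂)/2)`, a length whose square complements `r(θ₁ - θ₂)²` to `4`,
we get `h₁₂ + h₁₄ < 0`. Hence `-𝓗₁ = u (1, -1)(1, -1)ᵀ + diag(v₁, v₂)` with `u ≥ 0` and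
`v₁, v₂ > 0`, which is positive definite; the signs of its determinant and trace follow.
-/

open Real Matrix

noncomputable section

def hallH (x : ℝ) : ℝ := x ^ 2 / 2 - 1 + 1 / (4 * x) - 2 / x ^ 3

def chord (θ : ℝ) : ℝ := 2 * sin (θ / 2)

end

theorem hallH_eq (x : ℝ) : hallH x = x ^ 2 / 2 - 1 + (x ^ 2 - 8) / (4 * x ^ 3) := by
  rcases eq_or_ne x 0 with rfl | hx
  · simp [hallH]
  · unfold hallH
    field_simp
    ring

theorem hallH_neg {x : ℝ} (hx : 0 < x) (hx₂ : x ^ 2 ≤ 2) : hallH x < 0 := by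
  have : (x ^ 2 - 8) / (4 * x ^ 3) < 0 := div_neg_of_neg_of_pos (by linarith) (by positivity)
  rw [hallH_eq]
  linarith

theorem hallH_add_hallH_neg {x y : ℝ} (hx : 0 < x) (hy : 0 < y) (hxy : x ^ 2 + y ^ 2 = 4) :
    hallH x + hallH y < 0 := by
  have hx' : (x ^ 2 - 8) / (4 * x ^ 3) < 0 :=
    div_neg_of_neg_of_pos (by nlinarith) (by positivity)
  have hy' : (y ^ 2 - 8) / (4 * y ^ 3) < 0 :=
    div_neg_of_neg_of_pos (by nlinarith) (by positivity)
  rw [hallH_eq, hallH_eq]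
  linarith

theorem hallH_lt_hallH {x y : ℝ} (hx : 0 < x) (hxy : x < y) (hy : y ^ 2 ≤ 8) :
    hallH x < hallH y := by
  have hy₀ : 0 < y := hx.trans hxy
  have hdiff : hallH y - hallH x = (y ^ 2 - x ^ 2) / 2
      + (y - x) * (8 * (x ^ 2 + x * y + y ^ 2) - x ^ 2 * y ^ 2) / (4 * x ^ 3 * y ^ 3) := by
    unfold hallH
    field_simp
    ring
  have hsq : 0 < y ^ 2 - x ^ 2 := by nlinarith
  have hfactor : 0 < 8 * (x ^ 2 + x * y + y ^ 2) - x ^ 2 * y ^ 2 := by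
    nlinarith [mul_le_mul_of_nonneg_left hy (sq_nonneg x), mul_pos hx hy₀, sq_pos_of_pos hy₀]
  have hfrac : 0 < (y - x) * (8 * (x ^ 2 + x * y + y ^ 2) - x ^ 2 * y ^ 2)
      / (4 * x ^ 3 * y ^ 3) :=
    div_pos (mul_pos (sub_pos.2 hxy) hfactor) (by positivity)
  rw [← sub_pos, hdiff]
  positivity

theorem chord_sq (θ : ℝ) : chord θ ^ 2 = 2 - 2 * cos θ := by
  rw [chord, mul_pow, sin_sq_eq_half_sub, mul_div_cancel₀ θ two_ne_zero]
  ring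

theorem chord_pos {θ : ℝ} (h₀ : 0 < θ) (h : θ < 2 * π) : 0 < chord θ :=
  mul_pos two_pos (sin_pos_of_pos_of_lt_pi (by linarith) (by linarith))

theorem hallH_chord_neg {θ : ℝ} (h₀ : 0 < θ) (h : θ ≤ π / 2) : hallH (chord θ) < 0 := by
  have hcos : 0 ≤ cos θ := cos_nonneg_of_neg_pi_div_two_le_of_le (by linarith) h
  exact hallH_neg (chord_pos h₀ (by linarith)) (by rw [chord_sq]; linarith)

theorem hallH_chord_add_hallH_chord_neg {a b : ℝ} (ha : 0 < a) (hb : 0 < b) (hab : a + b < π) :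
    hallH (chord a) + hallH (chord b) < 0 := by
  have hc₀ : 0 < 2 * cos (a / 2) :=
    mul_pos two_pos (cos_pos_of_mem_Ioo ⟨by linarith, by linarith⟩)
  have hbc : chord b < 2 * cos (a / 2) := by
    rw [chord, ← sin_pi_div_two_sub]
    gcongr
    exact sin_lt_sin_of_lt_of_le_pi_div_two (by linarith) (by linarith) (by linarith)
  have hsq : chord a ^ 2 + (2 * cos (a / 2)) ^ 2 = 4 := by
    rw [chord]
    linear_combination 4 * sin_sq_add_cos_sq (a / 2)
  calc hallH (chord a) + hallH (chord b)
      < hallH (chord a) + hallH (2 * cos (a / 2)) :=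
        by gcongr; exact hallH_lt_hallH (chord_pos hb (by linarith)) hbc (by nlinarith)
    _ < 0 := hallH_add_hallH_neg (chord_pos ha (by linarith)) hc₀ hsq

theorem posDef_laplacian_add_diagonal {u v₁ v₂ : ℝ} (hu : 0 ≤ u) (hv₁ : 0 < v₁) (hv₂ : 0 < v₂) :
    (!![u + v₁, -u; -u, u + v₂]).PosDef := by
  have hdecomp : !![u + v₁, -u; -u, u + v₂]
      = diagonal ![v₁, v₂] + u • vecMulVec ![1, -1] (star ![1, -1]) := by
    ext i j
    fin_cases i <;> fin_cases j <;> simp [vecMulVec] <;> ring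
  rw [hdecomp]
  refine (PosDef.diagonal fun i => ?_).add_posSemidef ((posSemidef_vecMulVec_self_star _).smul hu)
  fin_cases i <;> assumption

/-- Let `s = 3`, `r(θ) = 2 sin(θ/2)`, and `h(r) = r²/2 − 1 + 1/(4r) − 2/r³`.
For `0 < θ₂ < θ₁ < π/2`, setting `h₁₂ = h(r(θ₁−θ₂))`, `h₁₄ = h(r(θ₁+θ₂))`,
`h₁₃ = h(r(θ₁))`, `h₂₃ = h(r(θ₂))`, for all positive masses `m₁, m₂, m₃ > 0`
the `2×2` symmetric block `𝓗₁` of the congruence-transformed Hessian has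
determinant `4m₁m₂m₃·((h₁₂+h₁₄)(h₁₃m₁ + h₂₃m₂) + h₁₃h₂₃m₃) > 0` and negative
trace; hence `𝓗₁` is negative definite. -/
theorem hessian_block_one_negative_definite
    (θ₁ θ₂ m₁ m₂ m₃ : ℝ) (h₂ : 0 < θ₂) (h₂₁ : θ₂ < θ₁) (h₁ : θ₁ < π / 2)
    (hm₁ : 0 < m₁) (hm₂ : 0 < m₂) (hm₃ : 0 < m₃)
    (r hh : ℝ → ℝ) (hr : r = fun θ => 2 * Real.sin (θ / 2))
    (hhh : hh = fun x => x ^ 2 / 2 - 1 + 1 / (4 * x) - 2 / x ^ 3)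
    (h₁₂ h₁₄ h₁₃ h₂₃ : ℝ)
    (e₁₂ : h₁₂ = hh (r (θ₁ - θ₂))) (e₁₄ : h₁₄ = hh (r (θ₁ + θ₂)))
    (e₁₃ : h₁₃ = hh (r θ₁)) (e₂₃ : h₂₃ = hh (r θ₂))
    (H1 : Matrix (Fin 2) (Fin 2) ℝ)
    (hH1 : H1 = !![2 * (h₁₂ + h₁₄) * m₁ * m₂ + 2 * h₁₃ * m₁ * m₃,
                   -(2 * m₁ * m₂ * (h₁₂ + h₁₄));
                   -(2 * m₁ * m₂ * (h₁₂ + h₁₄)),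
                   2 * (h₁₂ + h₁₄) * m₁ * m₂ + 2 * h₂₃ * m₂ * m₃]) :
    H1.det = 4 * m₁ * m₂ * m₃ *
        ((h₁₂ + h₁₄) * (h₁₃ * m₁ + h₂₃ * m₂) + h₁₃ * h₂₃ * m₃) ∧
      0 < H1.det ∧ H1.trace < 0 ∧ (-H1).PosDef := by
  subst hr hhh
  have hS : h₁₂ + h₁₄ < 0 := by
    rw [e₁₂, e₁₄]
    exact hallH_chord_add_hallH_chord_neg (by linarith) (by linarith) (by linarith)
  have h₁₃_neg : h₁₃ < 0 := by rw [e₁₃]; exact hallH_chord_neg (by linarith) h₁.le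
  have h₂₃_neg : h₂₃ < 0 := by rw [e₂₃]; exact hallH_chord_neg h₂ (by linarith)
  have hpos : (-H1).PosDef := by
    convert posDef_laplacian_add_diagonal (u := -(2 * (h₁₂ + h₁₄) * m₁ * m₂))
      (v₁ := -(2 * h₁₃ * m₁ * m₃)) (v₂ := -(2 * h₂₃ * m₂ * m₃)) ?_ ?_ ?_ using 1
    · rw [hH1]
      ext i j
      fin_cases i <;> fin_cases j <;> simp <;> ring
    · nlinarith [mul_pos hm₁ hm₂]
    · nlinarith [mul_pos hm₁ hm₃]
    · nlinarith [mul_pos hm₂ hm₃]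
  refine ⟨by rw [hH1, det_fin_two_of]; ring, ?_, ?_, hpos⟩
  · simpa [det_neg] using hpos.det_pos
  · simpa [trace_neg] using hpos.trace_pos
end

section
/- Consider the Newtonian 1+5 coorbital problem (s = 3) with angles satisfying −π/2 < θ₅ < θ₄ < θ₃ < θ₂ < θ₁ < π/2 (a convex configuration). If the masses satisfy m₁ = m₅ > 0, m₂ = m₄ > 0, m₃ > 0 and F m = 0, then θ₂ − θ₃ = θ₃ − θ₄ and θ₁ − θ₂ = θ₄ − θ₅ (equivalently θ₁ − θ₃ = θ₃ − θ₅); i.e., the configuration is symmetric about the axis through the central mass and the third point. -/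
/-!
For `T < π` the function `x ↦ f₃(x) − f₃(T − x)` is strictly decreasing on `(0, T)`: its
derivative is `f₃'(x) + f₃'(T − x)`, and `f₃'(α) + f₃'(β) < 0` for positive `α + β < π`, since
`f₃'(α) = −(1 + cos²(α/2)) / (8 sin³(α/2)) − cos α` and `cos α + cos β > 0`.

Let `a, b, c, d` be the gaps `θ₁ − θ₂, …, θ₄ − θ₅`. For symmetric masses, row 3 of `F m = 0`
and the sum of rows 2 and 4 say that `f₃(c + d) − f₃(a + b)` and
`f₃(a) − f₃(b + c + d) − (f₃(d) − f₃(a + b + c))` are positive multiples of `f₃(b) − f₃(c)`.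
By monotonicity these common signs give `b ≤ c`, `c + d ≤ a + b` and `a ≤ d`, or all three
reversed, and either way `b = c` and `a = d`.
-/

open Real Matrix

lemma coorbitalF_sub_comm (s a b : ℝ) : coorbitalF s (a - b) = -coorbitalF s (b - a) := by
  rw [coorbitalF, coorbitalF, ← neg_sub b a, sin_neg, neg_div, sin_neg, abs_neg]
  ring

lemma coorbitalF_three_eq {θ : ℝ} (h : 0 < sin (θ / 2)) :
    coorbitalF 3 θ = cos (θ / 2) / (4 * sin (θ / 2) ^ 2) - sin θ := by
  have h2 : (2 : ℝ) ^ (-(3 : ℝ)) = 1 / 8 := by norm_num [rpow_neg]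
  have hsin : sin θ = 2 * sin (θ / 2) * cos (θ / 2) := by
    rw [← sin_two_mul, mul_div_cancel₀ θ two_ne_zero]
  rw [coorbitalF, abs_of_pos h, h2, rpow_neg h.le, hsin]
  norm_cast
  field_simp
  ring

lemma hasDerivAt_coorbitalF_three {θ : ℝ} (h0 : 0 < θ) (h2π : θ < 2 * π) :
    HasDerivAt (coorbitalF 3) (-(1 + cos (θ / 2) ^ 2) / (8 * sin (θ / 2) ^ 3) - cos θ) θ := by
  have hs : 0 < sin (θ / 2) := sin_pos_of_pos_of_lt_pi (by linarith) (by linarith)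
  have hhalf : HasDerivAt (fun t : ℝ => t / 2) (1 / 2) θ := (hasDerivAt_id θ).div_const 2
  have hden : HasDerivAt (fun t => 4 * sin (t / 2) ^ 2)
      (4 * (2 * sin (θ / 2) * (cos (θ / 2) * (1 / 2)))) θ := by
    simpa using (hhalf.sin.fun_pow 2).const_mul 4
  have hclosed := (hhalf.cos.div hden (by positivity)).sub (hasDerivAt_sin θ)
  have heq : (fun t => cos (t / 2) / (4 * sin (t / 2) ^ 2) - sin t) =ᶠ[nhds θ] coorbitalF 3 := by
    filter_upwards [Ioo_mem_nhds h0 h2π] with t ht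
    exact (coorbitalF_three_eq (sin_pos_of_pos_of_lt_pi (by linarith [ht.1])
      (by linarith [ht.2]))).symm
  refine (hclosed.congr_of_eventuallyEq heq.symm).congr_deriv ?_
  field_simp
  linear_combination -8 * sin_sq_add_cos_sq (θ / 2)

lemma deriv_coorbitalF_three_add_deriv_neg {α β : ℝ} (hα : 0 < α) (hβ : 0 < β)
    (hαβ : α + β < π) : deriv (coorbitalF 3) α + deriv (coorbitalF 3) β < 0 := by
  rw [(hasDerivAt_coorbitalF_three hα (by linarith [pi_pos])).deriv,
    (hasDerivAt_coorbitalF_three hβ (by linarith [pi_pos])).deriv]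
  have hsα : 0 < sin (α / 2) := sin_pos_of_pos_of_lt_pi (by linarith) (by linarith)
  have hsβ : 0 < sin (β / 2) := sin_pos_of_pos_of_lt_pi (by linarith) (by linarith)
  have hcos : 0 < cos α + cos β := by
    rw [cos_add_cos]
    have h₁ : 0 < cos ((α + β) / 2) := cos_pos_of_mem_Ioo ⟨by linarith, by linarith⟩
    have h₂ : 0 < cos ((α - β) / 2) := cos_pos_of_mem_Ioo ⟨by linarith, by linarith⟩
    positivity
  have hα' : 0 < (1 + cos (α / 2) ^ 2) / (8 * sin (α / 2) ^ 3) := by positivity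
  have hβ' : 0 < (1 + cos (β / 2) ^ 2) / (8 * sin (β / 2) ^ 3) := by positivity
  rw [neg_div, neg_div]
  linarith

lemma strictAntiOn_coorbitalF_three_sub_reflect {T : ℝ} (hT : T < π) :
    StrictAntiOn (fun x => coorbitalF 3 x - coorbitalF 3 (T - x)) (Set.Ioo 0 T) := by
  have hderiv : ∀ x ∈ Set.Ioo 0 T, HasDerivAt (fun x => coorbitalF 3 x - coorbitalF 3 (T - x))
      (deriv (coorbitalF 3) x + deriv (coorbitalF 3) (T - x)) x := by
    intro x ⟨hx0, hxT⟩
    have hf : ∀ y, 0 < y → y < T → HasDerivAt (coorbitalF 3) (deriv (coorbitalF 3) y) y :=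
      fun y hy0 hyT => (hasDerivAt_coorbitalF_three hy0 (by linarith [pi_pos])).differentiableAt
        |>.hasDerivAt
    exact ((hf x hx0 hxT).fun_sub ((hf (T - x) (by linarith) (by linarith)).comp_const_sub T x))
      |>.congr_deriv (sub_neg_eq_add _ _)
  refine strictAntiOn_of_deriv_neg (convex_Ioo 0 T)
    (fun x hx => (hderiv x hx).continuousAt.continuousWithinAt) fun x hx => ?_
  rw [interior_Ioo] at hx
  rw [(hderiv x hx).deriv]
  exact deriv_coorbitalF_three_add_deriv_neg hx.1 (by linarith [hx.2]) (by linarith)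

lemma coorbitalF_three_sub_le_sub_iff {x u y v : ℝ} (hx : 0 < x) (hu : 0 < u) (hy : 0 < y)
    (hv : 0 < v) (hsum : x + u = y + v) (hπ : x + u < π) :
    coorbitalF 3 x - coorbitalF 3 u ≤ coorbitalF 3 y - coorbitalF 3 v ↔ y ≤ x := by
  have hu' : u = (x + u) - x := by ring
  have hv' : v = (x + u) - y := by linarith
  rw [hu', hv']
  exact (strictAntiOn_coorbitalF_three_sub_reflect hπ).le_iff_ge ⟨hx, by linarith⟩
    ⟨hy, by linarith⟩

lemma symmetric_of_coorbital_balance {θ₁ θ₂ θ₃ θ₄ θ₅ m₀ m₁ m₂ : ℝ} (h₅₄ : θ₅ < θ₄)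
    (h₄₃ : θ₄ < θ₃) (h₃₂ : θ₃ < θ₂) (h₂₁ : θ₂ < θ₁) (hπ : θ₁ - θ₅ < π)
    (hm₀ : 0 < m₀) (hm₁ : 0 < m₁) (hm₂ : 0 < m₂)
    (hrow₃ : m₀ * (coorbitalF 3 (θ₃ - θ₅) - coorbitalF 3 (θ₁ - θ₃))
      = m₁ * (coorbitalF 3 (θ₂ - θ₃) - coorbitalF 3 (θ₃ - θ₄)))
    (hrow₂₄ : m₀ * (coorbitalF 3 (θ₁ - θ₂) - coorbitalF 3 (θ₂ - θ₅)
        - (coorbitalF 3 (θ₄ - θ₅) - coorbitalF 3 (θ₁ - θ₄)))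
      = m₂ * (coorbitalF 3 (θ₂ - θ₃) - coorbitalF 3 (θ₃ - θ₄))) :
    θ₂ - θ₃ = θ₃ - θ₄ ∧ θ₁ - θ₂ = θ₄ - θ₅ := by
  have le_iff {x u y v : ℝ} (hx : 0 < x) (hu : 0 < u) (hy : 0 < y) (hv : 0 < v)
      (hsum : x + u = y + v) (hT : x + u ≤ θ₁ - θ₅) :=
    coorbitalF_three_sub_le_sub_iff hx hu hy hv hsum (hT.trans_lt hπ)
  rcases le_total 0 (coorbitalF 3 (θ₂ - θ₃) - coorbitalF 3 (θ₃ - θ₄)) with hr | hr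
  · have hb := (le_iff (x := θ₃ - θ₄) (u := θ₂ - θ₃) (y := θ₂ - θ₃) (v := θ₃ - θ₄)
      (by linarith) (by linarith) (by linarith) (by linarith) (by ring) (by linarith)).mp
      (by linarith)
    have hcd := (le_iff (x := θ₁ - θ₃) (u := θ₃ - θ₅) (y := θ₃ - θ₅) (v := θ₁ - θ₃)
      (by linarith) (by linarith) (by linarith) (by linarith) (by ring) (by linarith)).mp
      (by nlinarith)
    have had := (le_iff (x := θ₄ - θ₅) (u := θ₁ - θ₄) (y := θ₁ - θ₂) (v := θ₂ - θ₅)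
      (by linarith) (by linarith) (by linarith) (by linarith) (by ring) (by linarith)).mp
      (by nlinarith)
    constructor <;> linarith
  · have hb := (le_iff (x := θ₂ - θ₃) (u := θ₃ - θ₄) (y := θ₃ - θ₄) (v := θ₂ - θ₃)
      (by linarith) (by linarith) (by linarith) (by linarith) (by ring) (by linarith)).mp
      (by linarith)
    have hcd := (le_iff (x := θ₃ - θ₅) (u := θ₁ - θ₃) (y := θ₁ - θ₃) (v := θ₃ - θ₅)
      (by linarith) (by linarith) (by linarith) (by linarith) (by ring) (by linarith)).mp
      (by nlinarith)
    have had := (le_iff (x := θ₁ - θ₂) (u := θ₂ - θ₅) (y := θ₄ - θ₅) (v := θ₁ - θ₄)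
      (by linarith) (by linarith) (by linarith) (by linarith) (by ring) (by linarith)).mp
      (by nlinarith)
    constructor <;> linarith

/-- Newtonian 1+5 coorbital problem (`s = 3`) with a convex configuration
`−π/2 < θ₅ < θ₄ < θ₃ < θ₂ < θ₁ < π/2`.  If the masses satisfy `m₁ = m₅ > 0`,
`m₂ = m₄ > 0`, `m₃ > 0` and `F m = 0` (where `Fᵢⱼ = f₃(θᵢ − θⱼ)`), then
`θ₂ − θ₃ = θ₃ − θ₄` and `θ₁ − θ₂ = θ₄ − θ₅`; i.e. the configuration is symmetric
about the axis through the central mass and the third point. -/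
theorem symmetric_masses_imply_symmetric_one_plus_five
    (θ₁ θ₂ θ₃ θ₄ θ₅ : ℝ) (h₅ : -(π / 2) < θ₅) (h₅₄ : θ₅ < θ₄) (h₄₃ : θ₄ < θ₃)
    (h₃₂ : θ₃ < θ₂) (h₂₁ : θ₂ < θ₁) (h₁ : θ₁ < π / 2)
    (m : Fin 5 → ℝ) (hm15 : m 0 = m 4) (hm24 : m 1 = m 3)
    (hm1 : 0 < m 0) (hm2 : 0 < m 1) (hm3 : 0 < m 2)
    (hF : (Matrix.of fun i j : Fin 5 =>
        coorbitalF 3 (![θ₁, θ₂, θ₃, θ₄, θ₅] i - ![θ₁, θ₂, θ₃, θ₄, θ₅] j)).mulVec m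
      = 0) :
    θ₂ - θ₃ = θ₃ - θ₄ ∧ θ₁ - θ₂ = θ₄ - θ₅ := by
  have row₂ := congrFun hF 1
  have row₃ := congrFun hF 2
  have row₄ := congrFun hF 3
  simp only [mulVec, dotProduct, Fin.sum_univ_five, of_apply, Pi.zero_apply, Fin.isValue,
    cons_val_zero, cons_val_one, cons_val, sub_self, coorbitalF_zero, zero_mul, add_zero,
    coorbitalF_sub_comm 3 θ₂ θ₁, coorbitalF_sub_comm 3 θ₃ θ₁, coorbitalF_sub_comm 3 θ₃ θ₂,
    coorbitalF_sub_comm 3 θ₄ θ₁, coorbitalF_sub_comm 3 θ₄ θ₂, coorbitalF_sub_comm 3 θ₄ θ₃,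
    ← hm15, ← hm24] at row₂ row₃ row₄
  refine symmetric_of_coorbital_balance h₅₄ h₄₃ h₃₂ h₂₁ (by linarith) hm1 hm2 hm3 ?_ ?_
  · linear_combination row₃
  · linear_combination -row₂ - row₄
end
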